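/- Let l divide n, 1 ≤ p,q ≤ n/l, 0 ≤ k ≤ l−1, and 1 ≤ m ≤ l; set r := min(m, l−k). Then P(π(e_{l(p−1)+m, l(q−1)+1}^{(m+k)})) = Σ_{i=1}^{r} e_{l(p−1)+i, l(q−1)+i+k} and P(π(f_{l(p−1)+m, l(q−1)+1}^{(m+k)})) = Σ_{i=1}^{r} (−1)^{i+k−1} f_{l(p−1)+i, l(q−1)+i+k}. In particular, Gr_K(π(e_{l(p−1)+m, l(q−1)+1}^{(m+k)})) and Gr_K(π(f_{l(p−1)+m, l(q−1)+1}^{(m+k)})) have Kazhdan degree 2k+2 and highest weight 2k. -/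

import Mathlib

noncomputable section
open scoped Classical

/-! # The universal enveloping superalgebra `U(Q(n))` of the queer Lie superalgebra

`U(Q(n))` is presented by even generators `e i j` and odd generators `f i j`
(`1 ≤ i,j ≤ n`) subject to the relations
`[e i j, e k l] = δ_{jk} e i l - δ_{li} e k j`,
`[e i j, f k l] = δ_{jk} f i l - δ_{li} f k j`,
`f i j * f k l + f k l * f i j = δ_{jk} e i l + δ_{li} e k j`. -/

/-- Generators of `U(Q(n))`: `E i j` (even) and `F i j` (odd). -/
inductive QGen (n : ℕ) : Type
  | E : Fin n → Fin n → QGen n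
  | F : Fin n → Fin n → QGen n

/-- Kronecker delta. -/
def kd {n : ℕ} (i j : Fin n) : ℂ := if i = j then 1 else 0

/-- The defining relations of `U(Q(n))`. -/
inductive QRel (n : ℕ) : FreeAlgebra ℂ (QGen n) → FreeAlgebra ℂ (QGen n) → Prop
  | ee (i j k l : Fin n) : QRel n
      (FreeAlgebra.ι ℂ (QGen.E i j) * FreeAlgebra.ι ℂ (QGen.E k l) -
        FreeAlgebra.ι ℂ (QGen.E k l) * FreeAlgebra.ι ℂ (QGen.E i j))
      (kd j k • FreeAlgebra.ι ℂ (QGen.E i l) - kd l i • FreeAlgebra.ι ℂ (QGen.E k j))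
  | ef (i j k l : Fin n) : QRel n
      (FreeAlgebra.ι ℂ (QGen.E i j) * FreeAlgebra.ι ℂ (QGen.F k l) -
        FreeAlgebra.ι ℂ (QGen.F k l) * FreeAlgebra.ι ℂ (QGen.E i j))
      (kd j k • FreeAlgebra.ι ℂ (QGen.F i l) - kd l i • FreeAlgebra.ι ℂ (QGen.F k j))
  | ff (i j k l : Fin n) : QRel n
      (FreeAlgebra.ι ℂ (QGen.F i j) * FreeAlgebra.ι ℂ (QGen.F k l) +
        FreeAlgebra.ι ℂ (QGen.F k l) * FreeAlgebra.ι ℂ (QGen.F i j))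
      (kd j k • FreeAlgebra.ι ℂ (QGen.E i l) + kd l i • FreeAlgebra.ι ℂ (QGen.E k j))

/-- The universal enveloping superalgebra `U(Q(n))`. -/
abbrev UQ (n : ℕ) := RingQuot (QRel n)

/-- The generator `e i j` of `U(Q(n))`. -/
def Ue {n : ℕ} (i j : Fin n) : UQ n :=
  RingQuot.mkAlgHom ℂ (QRel n) (FreeAlgebra.ι ℂ (QGen.E i j))

/-- The generator `f i j` of `U(Q(n))`. -/
def Uf {n : ℕ} (i j : Fin n) : UQ n :=
  RingQuot.mkAlgHom ℂ (QRel n) (FreeAlgebra.ι ℂ (QGen.F i j))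

/-- Sergeev's elements `e_{ij}^{(m)}` and `f_{ij}^{(m)}` of `U(Q(n))`, defined recursively by
`e^{(0)} = δ`, `f^{(0)} = 0`,
`e_{ij}^{(m)} = Σ_k e_{ik} e_{kj}^{(m-1)} + (-1)^{m+1} Σ_k f_{ik} f_{kj}^{(m-1)}`,
`f_{ij}^{(m)} = Σ_k e_{ik} f_{kj}^{(m-1)} + (-1)^{m+1} Σ_k f_{ik} e_{kj}^{(m-1)}`. -/
def efU (n : ℕ) : ℕ → (Fin n → Fin n → UQ n) × (Fin n → Fin n → UQ n)
  | 0 => (fun i j => algebraMap ℂ (UQ n) (kd i j), fun _ _ => 0)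
  | m + 1 =>
      (fun i j => (∑ k, Ue i k * (efU n m).1 k j) +
        (-1 : ℂ) ^ m • ∑ k, Uf i k * (efU n m).2 k j,
       fun i j => (∑ k, Ue i k * (efU n m).2 k j) +
        (-1 : ℂ) ^ m • ∑ k, Uf i k * (efU n m).1 k j)

/-- `e_{ij}^{(m)}`. -/
def eU {n : ℕ} (m : ℕ) (i j : Fin n) : UQ n := (efU n m).1 i j
/-- `f_{ij}^{(m)}`. -/
def fU {n : ℕ} (m : ℕ) (i j : Fin n) : UQ n := (efU n m).2 i j

/-- For `l ∣ n`, the index `l(p-1)+i` of `{1,…,n}` (0-based: block `p`, position `i`). -/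
def bidx {n l : ℕ} (h : l ∣ n) (p : Fin (n / l)) (i : Fin l) : Fin n :=
  ⟨l * p.val + i.val, by
    have h1 : i.val < l := i.isLt
    have h2 : p.val + 1 ≤ n / l := p.isLt
    have h3 : l * (p.val + 1) ≤ l * (n / l) := Nat.mul_le_mul_left l h2
    have h4 : n / l * l ≤ n := Nat.div_mul_le_self n l
    have h5 : l * (p.val + 1) = l * p.val + l := Nat.mul_succ l p.val
    have h6 : l * (n / l) = n / l * l := Nat.mul_comm l (n / l)
    omega⟩
set_option linter.unusedVariables false

/-! # The character `χ`, the left ideal `I_χ` and the finite W-algebra data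

Here `l ∣ n` and `χ` corresponds to the even nilpotent element of `Q(n)` all of whose
Jordan blocks have size `l`.  The subalgebra `m = ⊕_{j<0} g_j` is spanned by the
elements `e_{l(p-1)+i+k, l(q-1)+i}` and `f_{l(p-1)+i+k, l(q-1)+i}` (`k ≥ 1`), and
`χ(e_{l(p-1)+i+1, l(q-1)+i}) = δ_{pq}` and `χ = 0` on the other basis elements. -/

/-- The set of elements `a - χ(a)` for `a` ranging over the standard basis of `m`;
(rows/columns written 0-based: `a` is the position of the row inside its block `p`,
`b` the position of the column inside its block `q`, with `b < a`). -/
def mSet (n l : ℕ) (h : l ∣ n) : Set (UQ n) :=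
  { x : UQ n | ∃ (p q : Fin (n / l)) (a b : Fin l), b.val < a.val ∧
      (x = Ue (bidx h p a) (bidx h q b) -
            algebraMap ℂ (UQ n) (if a.val = b.val + 1 ∧ p = q then 1 else 0) ∨
       x = Uf (bidx h p a) (bidx h q b)) }

/-- The left ideal `I_χ` of `U(Q(n))` generated by the `a - χ(a)`, `a ∈ m`. -/
def Ichi (n l : ℕ) (h : l ∣ n) : Submodule (UQ n) (UQ n) :=
  Submodule.span (UQ n) (mSet n l h)

/-- The quotient `U(Q(n))/I_χ` (as a `ℂ`-vector space). -/
abbrev Wq (n l : ℕ) (h : l ∣ n) := UQ n ⧸ (Ichi n l h).restrictScalars ℂ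

/-- The quotient map `π : U(Q(n)) → U(Q(n))/I_χ`. -/
def piq (n l : ℕ) (h : l ∣ n) : UQ n →ₗ[ℂ] Wq n l h :=
  ((Ichi n l h).restrictScalars ℂ).mkQ

/-- `y` super-commutes with `m` into `I_χ`:  `[a, y] ∈ I_χ` for every `a` in the standard
basis of `m`.  Here the super-commutator of the odd element `f` with (the possibly
non-homogeneous) `y` is `f * y - σ(y) * f`, where `σ` is the parity involution of
`U(Q(n))` (the algebra automorphism fixing the `e`'s and negating the `f`'s). -/
def Wcond {n l : ℕ} (h : l ∣ n) (σ : UQ n →ₐ[ℂ] UQ n) (y : UQ n) : Prop :=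
  ∀ (p q : Fin (n / l)) (a b : Fin l), b.val < a.val →
    (Ue (bidx h p a) (bidx h q b) * y - y * Ue (bidx h p a) (bidx h q b) ∈ Ichi n l h) ∧
    (Uf (bidx h p a) (bidx h q b) * y - σ y * Uf (bidx h p a) (bidx h q b) ∈ Ichi n l h)

/-- The finite W-algebra `W_χ = {π(y) | [a, y] ∈ I_χ for all a ∈ m}`, as a subset of
`U(Q(n))/I_χ`.  (Its product is `π(y₁)·π(y₂) = π(y₁y₂)`.) -/
def WchiSet (n l : ℕ) (h : l ∣ n) (σ : UQ n →ₐ[ℂ] UQ n) : Set (Wq n l h) :=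
  { w : Wq n l h | ∃ y : UQ n, Wcond h σ y ∧ piq n l h y = w }

/-- The standard basis elements of the parabolic subalgebra `p = ⊕_{j≥0} g_j`. -/
def pSet (n l : ℕ) (h : l ∣ n) : Set (UQ n) :=
  { x : UQ n | ∃ (p q : Fin (n / l)) (a b : Fin l), a.val ≤ b.val ∧
      (x = Ue (bidx h p a) (bidx h q b) ∨ x = Uf (bidx h p a) (bidx h q b)) }

/-- The standard basis elements of the nilradical `n = ⊕_{j>0} g_j` of `p`. -/
def nSet (n l : ℕ) (h : l ∣ n) : Set (UQ n) :=
  { x : UQ n | ∃ (p q : Fin (n / l)) (a b : Fin l), a.val < b.val ∧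
      (x = Ue (bidx h p a) (bidx h q b) ∨ x = Uf (bidx h p a) (bidx h q b)) }

/-- The kernel of the Harish-Chandra projection `ϑ : U(p) → U(g₀)`, realized inside
`U(Q(n))`: the `ℂ`-span of `U(p)·n`.  (By the PBW theorem, `U(g) = U(p) ⊕ I_χ` and
`U(p) = U(g₀) ⊕ U(p)n`, so for `y ∈ U(g)`, `ϑ(pr(y)) = t` iff
`y - t ∈ I_χ + U(p)n`.) -/
def Lspan (n l : ℕ) (h : l ∣ n) : Submodule ℂ (UQ n) :=
  Submodule.span ℂ
    { x : UQ n | ∃ u ∈ Algebra.adjoin ℂ (pSet n l h), ∃ g ∈ nSet n l h, x = u * g }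

/-- A descriptor of a generator of `U(p)`:  `(b, p, q, a, c)` is
`e_{l(p-1)+(a+1), l(q-1)+(c+1)}` if `b = false` and `f_{…}` if `b = true`
(required: `a ≤ c`). -/
def pgElem {n l : ℕ} (h : l ∣ n) :
    Bool × Fin (n / l) × Fin (n / l) × Fin l × Fin l → UQ n
  | (b, p, q, a, c) => (if b then Uf else Ue) (bidx h p a) (bidx h q c)

/-- Kazhdan degree `2k+2` of a `p`-generator of block offset `k = c - a`. -/
def pgDeg {l m : ℕ} (d : Bool × Fin m × Fin m × Fin l × Fin l) : ℕ :=
  2 * (d.2.2.2.2.val - d.2.2.2.1.val) + 2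

/-- Weight `2k` of a `p`-generator of block offset `k = c - a`. -/
def pgWt {l m : ℕ} (d : Bool × Fin m × Fin m × Fin l × Fin l) : ℕ :=
  2 * (d.2.2.2.2.val - d.2.2.2.1.val)

/-- Monomials in the generators of `U(p)` which are "lower" than bidegree
(Kazhdan degree `D`, weight `W`): either of Kazhdan degree `< D`, or of Kazhdan
degree `≤ D` and weight `< W`. -/
def LowSet (n l : ℕ) (h : l ∣ n) (D W : ℕ) : Set (UQ n) :=
  { x : UQ n | ∃ L : List (Bool × Fin (n / l) × Fin (n / l) × Fin l × Fin l),
      (∀ d ∈ L, d.2.2.2.1.val ≤ d.2.2.2.2.val) ∧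
      x = (L.map (pgElem h)).prod ∧
      ((L.map pgDeg).sum < D ∨ ((L.map pgDeg).sum ≤ D ∧ (L.map pgWt).sum < W)) }

/-- The span of the "lower" monomials. -/
def LowSpan (n l : ℕ) (h : l ∣ n) (D W : ℕ) : Submodule ℂ (UQ n) :=
  Submodule.span ℂ (LowSet n l h D W)

/-! # The super tensor power `U(Q(m))^{⊗l}`

Modeled as the superalgebra with generators `x^i_{pq} = 1^{⊗(l-i)} ⊗ e_{pq} ⊗ 1^{⊗(i-1)}`
(even) and `ξ^i_{pq} = 1^{⊗(l-i)} ⊗ f_{pq} ⊗ 1^{⊗(i-1)}` (odd), subject to the `U(Q(m))`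
relations in each tensor slot and to (super-)commutation between different slots. -/

/-- Generators of `U(Q(m))^{⊗l}`: `X i p q` is `x^i_{pq}` and `Xi i p q` is `ξ^i_{pq}`
(`i : Fin l` is the 0-based tensor slot, counted from the right). -/
inductive TGen (m l : ℕ) : Type
  | X : Fin l → Fin m → Fin m → TGen m l
  | Xi : Fin l → Fin m → Fin m → TGen m l

/-- Kronecker delta on slots. -/
def kdl {l : ℕ} (i j : Fin l) : ℂ := if i = j then 1 else 0

/-- The defining relations of `U(Q(m))^{⊗l}`. -/
inductive TRel (m l : ℕ) : FreeAlgebra ℂ (TGen m l) → FreeAlgebra ℂ (TGen m l) → Prop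
  | xx (i i' : Fin l) (p q r s : Fin m) : TRel m l
      (FreeAlgebra.ι ℂ (TGen.X i p q) * FreeAlgebra.ι ℂ (TGen.X i' r s) -
        FreeAlgebra.ι ℂ (TGen.X i' r s) * FreeAlgebra.ι ℂ (TGen.X i p q))
      ((kdl i i' * kd q r) • FreeAlgebra.ι ℂ (TGen.X i p s) -
        (kdl i i' * kd s p) • FreeAlgebra.ι ℂ (TGen.X i' r q))
  | xxi (i i' : Fin l) (p q r s : Fin m) : TRel m l
      (FreeAlgebra.ι ℂ (TGen.X i p q) * FreeAlgebra.ι ℂ (TGen.Xi i' r s) -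
        FreeAlgebra.ι ℂ (TGen.Xi i' r s) * FreeAlgebra.ι ℂ (TGen.X i p q))
      ((kdl i i' * kd q r) • FreeAlgebra.ι ℂ (TGen.Xi i p s) -
        (kdl i i' * kd s p) • FreeAlgebra.ι ℂ (TGen.Xi i' r q))
  | xixi (i i' : Fin l) (p q r s : Fin m) : TRel m l
      (FreeAlgebra.ι ℂ (TGen.Xi i p q) * FreeAlgebra.ι ℂ (TGen.Xi i' r s) +
        FreeAlgebra.ι ℂ (TGen.Xi i' r s) * FreeAlgebra.ι ℂ (TGen.Xi i p q))
      ((kdl i i' * kd q r) • FreeAlgebra.ι ℂ (TGen.X i p s) +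
        (kdl i i' * kd s p) • FreeAlgebra.ι ℂ (TGen.X i' r q))

/-- The superalgebra `U(Q(m))^{⊗l}`. -/
abbrev TQ (m l : ℕ) := RingQuot (TRel m l)

/-- `x^i_{pq} := 1^{⊗(l-i)} ⊗ e_{pq} ⊗ 1^{⊗(i-1)} ∈ U(Q(m))^{⊗l}`. -/
def xT {m l : ℕ} (i : Fin l) (p q : Fin m) : TQ m l :=
  RingQuot.mkAlgHom ℂ (TRel m l) (FreeAlgebra.ι ℂ (TGen.X i p q))

/-- `ξ^i_{pq} := 1^{⊗(l-i)} ⊗ f_{pq} ⊗ 1^{⊗(i-1)} ∈ U(Q(m))^{⊗l}`. -/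
def xiT {m l : ℕ} (i : Fin l) (p q : Fin m) : TQ m l :=
  RingQuot.mkAlgHom ℂ (TRel m l) (FreeAlgebra.ι ℂ (TGen.Xi i p q))

/-! # The super-Yangian `Y(Q(n))` -/

/-- The index set `{±1, …, ±n}`:  `(false, a)` is the positive index `a` (even),
`(true, a)` is the negative index `-a` (odd). -/
abbrev QIdx (n : ℕ) := Bool × Fin n

/-- Negation `i ↦ -i` on indices. -/
def qneg {n : ℕ} (i : QIdx n) : QIdx n := (!i.1, i.2)

/-- The parity `p(i)`: `0` for positive `i`, `1` for negative `i`. -/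
def qpar {n : ℕ} (i : QIdx n) : ℕ := if i.1 then 1 else 0

/-- Kronecker delta on `{±1, …, ±n}`. -/
def kdq {n : ℕ} (i j : QIdx n) : ℂ := if i = j then 1 else 0

/-- Generators of `Y(Q(n))`: `T m i j` encodes `T^{(m+1)}_{i,j}`. -/
inductive YGen (n : ℕ) : Type
  | T : ℕ → QIdx n → QIdx n → YGen n

/-- `T^{(m)}_{i,j}` in the free algebra, with `T^{(0)}_{i,j} = δ_{ij}`. -/
def Tf {n : ℕ} : ℕ → QIdx n → QIdx n → FreeAlgebra ℂ (YGen n)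
  | 0, i, j => algebraMap ℂ _ (kdq i j)
  | m + 1, i, j => FreeAlgebra.ι ℂ (YGen.T m i j)

/-- The super-commutator `[T^{(a)}_{i,j}, T^{(b)}_{k,l}]` in the free algebra. -/
def ybr {n : ℕ} (a : ℕ) (i j : QIdx n) (b : ℕ) (k l : QIdx n) :
    FreeAlgebra ℂ (YGen n) :=
  Tf a i j * Tf b k l -
    ((-1 : ℂ) ^ ((qpar i + qpar j) * (qpar k + qpar l))) • (Tf b k l * Tf a i j)

/-- The defining relations of the super-Yangian `Y(Q(n))`: for `M, R ≥ 1`,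
`(-1)^{p(i)p(k)+p(i)p(l)+p(k)p(l)} ([T^{(M+1)}_{ij}, T^{(R-1)}_{kl}] - [T^{(M-1)}_{ij}, T^{(R+1)}_{kl}])
 = T^{(M)}_{kj}T^{(R-1)}_{il} + T^{(M-1)}_{kj}T^{(R)}_{il} - T^{(R-1)}_{kj}T^{(M)}_{il}
   - T^{(R)}_{kj}T^{(M-1)}_{il}
   + (-1)^{p(k)+p(l)} (-T^{(M)}_{-k,j}T^{(R-1)}_{-i,l} + T^{(M-1)}_{-k,j}T^{(R)}_{-i,l}
       + T^{(R-1)}_{k,-j}T^{(M)}_{i,-l} - T^{(R)}_{k,-j}T^{(M-1)}_{i,-l})`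
(here `M = m+1`, `R = r+1`), together with `T^{(m)}_{-i,-j} = (-1)^m T^{(m)}_{i,j}`. -/
inductive YRel (n : ℕ) : FreeAlgebra ℂ (YGen n) → FreeAlgebra ℂ (YGen n) → Prop
  | quad (m r : ℕ) (i j k l : QIdx n) : YRel n
      (((-1 : ℂ) ^ (qpar i * qpar k + qpar i * qpar l + qpar k * qpar l)) •
        (ybr (m + 2) i j r k l - ybr m i j (r + 2) k l))
      (Tf (m + 1) k j * Tf r i l + Tf m k j * Tf (r + 1) i l -
        Tf r k j * Tf (m + 1) i l - Tf (r + 1) k j * Tf m i l +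
        ((-1 : ℂ) ^ (qpar k + qpar l)) •
          (-(Tf (m + 1) (qneg k) j * Tf r (qneg i) l) +
            Tf m (qneg k) j * Tf (r + 1) (qneg i) l +
            Tf r k (qneg j) * Tf (m + 1) i (qneg l) -
            Tf (r + 1) k (qneg j) * Tf m i (qneg l)))
  | par (m : ℕ) (i j : QIdx n) : YRel n
      (Tf (m + 1) (qneg i) (qneg j)) (((-1 : ℂ) ^ (m + 1)) • Tf (m + 1) i j)

/-- The super-Yangian `Y(Q(n))`. -/
abbrev YQ (n : ℕ) := RingQuot (YRel n)

/-- The generator `T^{(m)}_{i,j}` of `Y(Q(n))` (with `T^{(0)}_{i,j} = δ_{ij}`). -/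
def TY {n : ℕ} (m : ℕ) (i j : QIdx n) : YQ n :=
  RingQuot.mkAlgHom ℂ (YRel n) (Tf m i j)

/-! # Values of the homomorphisms `U`, `ev`, `ēv` on the generators of `Y(Q(n))`,
and the explicit sums appearing in the main theorems. -/

/-- The value of the homomorphism `U : Y(Q(n)) → U(Q(n))` on the generator
`T^{(r)}_{i,j}`:  `U(T^{(r)}_{i,j}) = (-1)^r e^{(r)}_{j,i}`,
`U(T^{(r)}_{-i,j}) = (-1)^r f^{(r)}_{j,i}` for `i, j > 0`, and the values on the other
generators are forced by `T^{(r)}_{-i,-j} = (-1)^r T^{(r)}_{i,j}`. -/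
def Uval {n : ℕ} (r : ℕ) (i j : QIdx n) : UQ n :=
  (if j.1 then (-1 : ℂ) ^ r else 1) •
    ((-1 : ℂ) ^ r • (if xor i.1 j.1 then fU r j.2 i.2 else eU r j.2 i.2))

/-- The value of the evaluation homomorphism `ev : Y(Q(n)) → U(Q(n))` on `T^{(r)}_{i,j}`:
`ev(T^{(1)}_{i,j}) = -e_{j,i}`, `ev(T^{(1)}_{-i,j}) = -f_{j,i}` for `i, j > 0`,
`ev(T^{(0)}_{i,j}) = δ_{ij}` and `ev(T^{(r)}_{i,j}) = 0` for `r > 1` (with the values on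
the remaining generators forced by `T^{(r)}_{-i,-j} = (-1)^r T^{(r)}_{i,j}`). -/
def evval {n : ℕ} (r : ℕ) (i j : QIdx n) : UQ n :=
  (if j.1 then (-1 : ℂ) ^ r else 1) •
    (match r with
      | 0 => if xor i.1 j.1 then 0 else algebraMap ℂ (UQ n) (kd i.2 j.2)
      | 1 => -(if xor i.1 j.1 then Uf j.2 i.2 else Ue j.2 i.2)
      | _ + 2 => 0)

/-- The value of `ēv = α ∘ ev : Y(Q(n)) → U(Q(n))` on `T^{(r)}_{i,j}`, where `α` is the
principal anti-automorphism of `U(Q(n))`:  `ēv(T^{(1)}_{i,j}) = e_{j,i}`,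
`ēv(T^{(1)}_{-i,j}) = f_{j,i}` for `i, j > 0`, `ēv(T^{(0)}_{i,j}) = δ_{ij}`,
`ēv(T^{(r)}_{i,j}) = 0` for `r > 1`. -/
def bevval {n : ℕ} (r : ℕ) (i j : QIdx n) : UQ n :=
  (if j.1 then (-1 : ℂ) ^ r else 1) •
    (match r with
      | 0 => if xor i.1 j.1 then 0 else algebraMap ℂ (UQ n) (kd i.2 j.2)
      | 1 => (if xor i.1 j.1 then Uf j.2 i.2 else Ue j.2 i.2)
      | _ + 2 => 0)

/-- The sum `Σ_{p_1,…,p_{r-1}} Σ_{l ≥ i_1 ≥ i_2 ≥ … ≥ i_r ≥ 1}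
Π_{a=1}^r (x^{i_a}_{p_{a-1},p_a} + (-1)^{r-a} ξ^{i_a}_{p_{a-1},p_a})`
(with `p_0 = p`, `p_r = q`), an element of `U(Q(m))^{⊗l}`. -/
def chainProdDec (m l : ℕ) (r : ℕ) (p q : Fin m) : TQ m l :=
  ∑ c : Fin (r + 1) → Fin m, ∑ iv : Fin r → Fin l,
    (if c 0 = p ∧ c (Fin.last r) = q ∧ (∀ a b : Fin r, a ≤ b → iv b ≤ iv a)
      then (1 : ℂ) else 0) •
      (List.ofFn fun a : Fin r =>
        xT (iv a) (c a.castSucc) (c a.succ) +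
          ((-1 : ℂ) ^ (r - 1 - a.val)) • xiT (iv a) (c a.castSucc) (c a.succ)).prod

/-- The sum `Σ_{p_1,…,p_{r-1}} Σ_{1 ≤ i_1 < i_2 < … < i_r ≤ l}
Π_{a=1}^r (x^{i_a}_{p_{a-1},p_a} + (-1)^{r-a} ξ^{i_a}_{p_{a-1},p_a})`
(with `p_0 = p`, `p_r = q`), an element of `U(Q(m))^{⊗l}`. -/
def chainProdInc (m l : ℕ) (r : ℕ) (p q : Fin m) : TQ m l :=
  ∑ c : Fin (r + 1) → Fin m, ∑ iv : Fin r → Fin l,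
    (if c 0 = p ∧ c (Fin.last r) = q ∧ (∀ a b : Fin r, a < b → iv a < iv b)
      then (1 : ℂ) else 0) •
      (List.ofFn fun a : Fin r =>
        xT (iv a) (c a.castSucc) (c a.succ) +
          ((-1 : ℂ) ^ (r - 1 - a.val)) • xiT (iv a) (c a.castSucc) (c a.succ)).prod

/-- The elements `z^{(r)}_{±q,p}` of `U(Q(m))^{⊗l}`:  the even (`sgn = false`,
giving `z^{(r)}_{q,p}`) resp. odd (`sgn = true`, giving `z^{(r)}_{-q,p}`) component of
`chainProdDec`, computed using the parity involution `σT` of `U(Q(m))^{⊗l}`;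
`z^{(0)}_{q,p} = δ_{qp}`, `z^{(0)}_{-q,p} = 0`. -/
def zDec {m l : ℕ} (σT : TQ m l →ₐ[ℂ] TQ m l) :
    ℕ → Bool → Fin m → Fin m → TQ m l
  | 0, sgn, q, p => if sgn then 0 else algebraMap ℂ (TQ m l) (kd q p)
  | r + 1, sgn, q, p =>
      (2⁻¹ : ℂ) • (chainProdDec m l (r + 1) p q +
        (if sgn then (-1 : ℂ) else 1) • σT (chainProdDec m l (r + 1) p q))

/-- The elements `z̃^{(r)}_{±q,p}` of `U(Q(m))^{⊗l}` (as `zDec`, with increasing chains). -/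
def zInc {m l : ℕ} (σT : TQ m l →ₐ[ℂ] TQ m l) :
    ℕ → Bool → Fin m → Fin m → TQ m l
  | 0, sgn, q, p => if sgn then 0 else algebraMap ℂ (TQ m l) (kd q p)
  | r + 1, sgn, q, p =>
      (2⁻¹ : ℂ) • (chainProdInc m l (r + 1) p q +
        (if sgn then (-1 : ℂ) else 1) • σT (chainProdInc m l (r + 1) p q))

/-- The explicit formula for the antipode value `S(T^{(r)}_{i,j})` (`r ≥ 1`):
`S(T^{(r)}_{i,j}) = Σ_{m=1}^{r} (-1)^m Σ_{i_1,…,i_{m-1}} Σ_{r_1+⋯+r_m=r, r_a>0}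
(-1)^{ν(i,i_1,…,i_{m-1},j)} T^{(r_1)}_{i,i_1} ⋯ T^{(r_m)}_{i_{m-1},j}` where
`ν(i_0,…,i_m) = Σ_{0≤k<s≤m-1} (p(i_k)+p(i_{k+1}))(p(i_s)+p(i_{s+1}))`. -/
def STval {n : ℕ} (r : ℕ) (i j : QIdx n) : YQ n :=
  ∑ m : Fin r,
    ((-1 : ℂ) ^ (m.val + 1)) •
      ∑ ch : Fin (m.val + 2) → QIdx n, ∑ c : Fin (m.val + 1) → Fin (r + 1),
        (if ch 0 = i ∧ ch (Fin.last (m.val + 1)) = j ∧ (∀ a, 1 ≤ (c a).val) ∧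
              (∑ a, (c a).val) = r
          then ((-1 : ℂ) ^ (∑ a : Fin (m.val + 1), ∑ b : Fin (m.val + 1),
              if a < b then
                (qpar (ch a.castSucc) + qpar (ch a.succ)) *
                  (qpar (ch b.castSucc) + qpar (ch b.succ))
              else 0))
          else 0) •
        (List.ofFn fun a : Fin (m.val + 1) =>
          TY (c a).val (ch a.castSucc) (ch a.succ)).prod


/-! ### Auxiliary development for Statement 7 -/

section Aux7

variable {n : ℕ}

lemma kd_comm (i j : Fin n) : kd i j = kd j i := by
  simp only [kd]; by_cases hij : i = j <;> simp [hij, Ne.symm, eq_comm]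

lemma rel_ee (i j k l : Fin n) :
    Ue i j * Ue k l - Ue k l * Ue i j = kd j k • Ue i l - kd l i • Ue k j := by
  have := RingQuot.mkAlgHom_rel ℂ (QRel.ee (n := n) i j k l)
  simpa [Ue, map_sub, map_mul, map_smul] using this

lemma rel_ef (i j k l : Fin n) :
    Ue i j * Uf k l - Uf k l * Ue i j = kd j k • Uf i l - kd l i • Uf k j := by
  have := RingQuot.mkAlgHom_rel ℂ (QRel.ef (n := n) i j k l)
  simpa [Ue, Uf, map_sub, map_mul, map_smul] using this

lemma rel_ff (i j k l : Fin n) :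
    Uf i j * Uf k l + Uf k l * Uf i j = kd j k • Ue i l + kd l i • Ue k j := by
  have := RingQuot.mkAlgHom_rel ℂ (QRel.ff (n := n) i j k l)
  simpa [Ue, Uf, map_add, map_mul, map_smul] using this

lemma rel_fe (i j k l : Fin n) :
    Uf k l * Ue i j - Ue i j * Uf k l = kd l i • Uf k j - kd j k • Uf i l := by
  have := rel_ef i j k l
  rw [(neg_sub (Ue i j * Uf k l) (Uf k l * Ue i j)).symm, this]; abel

lemma eU_zero (i j : Fin n) : eU 0 i j = algebraMap ℂ (UQ n) (kd i j) := rfl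

lemma fU_zero (i j : Fin n) : fU 0 i j = 0 := rfl

lemma eU_succ (M : ℕ) (i j : Fin n) :
    eU (M + 1) i j = (∑ t, Ue i t * eU M t j) + (-1 : ℂ) ^ M • ∑ t, Uf i t * fU M t j := rfl

lemma fU_succ (M : ℕ) (i j : Fin n) :
    fU (M + 1) i j = (∑ t, Ue i t * fU M t j) + (-1 : ℂ) ^ M • ∑ t, Uf i t * eU M t j := rfl

/-- collapse `∑ t, kd j t • g t = g j` -/
lemma kd_collapse (j : Fin n) (g : Fin n → UQ n) : ∑ t, kd j t • g t = g j := by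
  simp [kd, ite_smul, Finset.sum_ite_eq]

lemma kd_collapse' (j : Fin n) (g : Fin n → UQ n) : ∑ t, kd t j • g t = g j := by
  simp [kd, ite_smul, Finset.sum_ite_eq']

lemma kd_mul_kd (i j k l : Fin n) : kd j k * kd i l = kd l i * kd k j := by
  simp only [kd]
  by_cases h1 : j = k <;> by_cases h2 : i = l <;>
    simp [h1, h2, eq_comm] <;> simp [Ne.symm]


lemma rel_fe' (i j k l : Fin n) :
    Uf i j * Ue k l - Ue k l * Uf i j = kd j k • Uf i l - kd l i • Uf k j := by
  have := rel_ef k l i j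
  have h2 : Uf i j * Ue k l - Ue k l * Uf i j = -(Ue k l * Uf i j - Uf i j * Ue k l) := by
    rw [neg_sub]
  rw [h2, this, kd_comm l i, kd_comm j k]; abel

lemma comm_mul_right (a b c : UQ n) :
    a * (b * c) - b * c * a = (a * b - b * a) * c + b * (a * c - c * a) := by
  simp only [sub_mul, mul_sub, mul_assoc]; abel

lemma acom1 (a b c : UQ n) :
    a * (b * c) - b * c * a = (a * b + b * a) * c - b * (a * c + c * a) := by
  simp only [add_mul, mul_add, mul_assoc, smul_mul_assoc, mul_smul_comm]; abel

lemma acom2 (a b c : UQ n) :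
    a * (b * c) + b * c * a = (a * b - b * a) * c + b * (a * c + c * a) := by
  simp only [add_mul, mul_add, sub_mul, mul_sub, mul_assoc, smul_mul_assoc, mul_smul_comm]; abel

lemma acom3 (a b c : UQ n) :
    a * (b * c) + b * c * a = (a * b + b * a) * c - b * (a * c - c * a) := by
  simp only [add_mul, mul_add, sub_mul, mul_sub, mul_assoc, smul_mul_assoc, mul_smul_comm]; abel

/-- The four commutation formulas, proven jointly by induction on `M`. -/
lemma comm_formulas (M : ℕ) : ∀ i j k l : Fin n,
    (Ue i j * eU M k l - eU M k l * Ue i j = kd j k • eU M i l - kd l i • eU M k j) ∧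
    (Ue i j * fU M k l - fU M k l * Ue i j = kd j k • fU M i l - kd l i • fU M k j) ∧
    (Uf i j * eU M k l - eU M k l * Uf i j =
      ((-1 : ℂ) ^ (M + 1) * kd j k) • fU M i l - kd l i • fU M k j) ∧
    (Uf i j * fU M k l + fU M k l * Uf i j =
      ((-1 : ℂ) ^ (M + 1) * kd j k) • eU M i l + kd l i • eU M k j) := by
  induction M with
  | zero =>
      intro i j k l
      have hcomm : ∀ (c : ℂ) (x : UQ n),
          x * algebraMap ℂ (UQ n) c - algebraMap ℂ (UQ n) c * x = 0 := by
        intro c x; rw [Algebra.commutes, sub_self]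
      have hscal : ∀ c : ℂ, algebraMap ℂ (UQ n) c = c • (1 : UQ n) := by
        intro c; rw [Algebra.algebraMap_eq_smul_one]
      refine ⟨?_, ?_, ?_, ?_⟩
      · show Ue i j * algebraMap ℂ (UQ n) (kd k l) - algebraMap ℂ (UQ n) (kd k l) * Ue i j
          = kd j k • algebraMap ℂ (UQ n) (kd i l) - kd l i • algebraMap ℂ (UQ n) (kd k j)
        rw [Algebra.commutes, hscal (kd i l), hscal (kd k j), smul_smul, smul_smul,
          kd_mul_kd i j k l, sub_self, sub_self]
      · show Ue i j * 0 - 0 * Ue i j = kd j k • (0 : UQ n) - kd l i • (0 : UQ n)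
        simp
      · show Uf i j * algebraMap ℂ (UQ n) (kd k l) - algebraMap ℂ (UQ n) (kd k l) * Uf i j
          = ((-1 : ℂ) ^ (0 + 1) * kd j k) • (0 : UQ n) - kd l i • (0 : UQ n)
        rw [Algebra.commutes]; simp
      · show Uf i j * 0 + 0 * Uf i j
          = ((-1 : ℂ) ^ (0 + 1) * kd j k) • algebraMap ℂ (UQ n) (kd i l)
            + kd l i • algebraMap ℂ (UQ n) (kd k j)
        rw [hscal (kd i l), hscal (kd k j), smul_smul, smul_smul]
        have : (-1 : ℂ) ^ (0 + 1) * kd j k * kd i l = -(kd j k * kd i l) := by ring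
        rw [this, kd_mul_kd i j k l]
        simp only [mul_zero, zero_mul, zero_add]
        rw [neg_smul]; abel
  | succ M ih =>
      intro i j k l
      have ih1 := fun i j k l => (ih i j k l).1
      have ih2 := fun i j k l => (ih i j k l).2.1
      have ih3 := fun i j k l => (ih i j k l).2.2.1
      have ih4 := fun i j k l => (ih i j k l).2.2.2
      have P1 : (∑ t, (Ue i j * (Ue k t * eU M t l) - Ue k t * eU M t l * Ue i j))
          = kd j k • (∑ t, Ue i t * eU M t l) - kd l i • (∑ t, Ue k t * eU M t j) := by
        rw [Finset.sum_congr rfl fun t _ => by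
          rw [comm_mul_right, rel_ee i j k t, ih1 i j t l]]
        simp only [sub_mul, mul_sub, smul_mul_assoc, mul_smul_comm,
          Finset.sum_add_distrib, Finset.sum_sub_distrib]
        rw [← Finset.smul_sum, ← Finset.smul_sum, kd_collapse' i, kd_collapse j]
        abel
      have P2 : (∑ t, (Ue i j * (Uf k t * fU M t l) - Uf k t * fU M t l * Ue i j))
          = kd j k • (∑ t, Uf i t * fU M t l) - kd l i • (∑ t, Uf k t * fU M t j) := by
        rw [Finset.sum_congr rfl fun t _ => by
          rw [comm_mul_right, rel_ef i j k t, ih2 i j t l]]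
        simp only [sub_mul, mul_sub, smul_mul_assoc, mul_smul_comm,
          Finset.sum_add_distrib, Finset.sum_sub_distrib]
        rw [← Finset.smul_sum, ← Finset.smul_sum, kd_collapse' i, kd_collapse j]
        abel
      have P3 : (∑ t, (Ue i j * (Ue k t * fU M t l) - Ue k t * fU M t l * Ue i j))
          = kd j k • (∑ t, Ue i t * fU M t l) - kd l i • (∑ t, Ue k t * fU M t j) := by
        rw [Finset.sum_congr rfl fun t _ => by
          rw [comm_mul_right, rel_ee i j k t, ih2 i j t l]]
        simp only [sub_mul, mul_sub, smul_mul_assoc, mul_smul_comm,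
          Finset.sum_add_distrib, Finset.sum_sub_distrib]
        rw [← Finset.smul_sum, ← Finset.smul_sum, kd_collapse' i, kd_collapse j]
        abel
      have P4 : (∑ t, (Ue i j * (Uf k t * eU M t l) - Uf k t * eU M t l * Ue i j))
          = kd j k • (∑ t, Uf i t * eU M t l) - kd l i • (∑ t, Uf k t * eU M t j) := by
        rw [Finset.sum_congr rfl fun t _ => by
          rw [comm_mul_right, rel_ef i j k t, ih1 i j t l]]
        simp only [sub_mul, mul_sub, smul_mul_assoc, mul_smul_comm,
          Finset.sum_add_distrib, Finset.sum_sub_distrib]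
        rw [← Finset.smul_sum, ← Finset.smul_sum, kd_collapse' i, kd_collapse j]
        abel
      have P5 : (∑ t, (Uf i j * (Ue k t * eU M t l) - Ue k t * eU M t l * Uf i j))
          = kd j k • (∑ t, Uf i t * eU M t l) - Uf k j * eU M i l
            + ((-1 : ℂ) ^ (M + 1)) • (Ue k j * fU M i l)
            - kd l i • (∑ t, Ue k t * fU M t j) := by
        rw [Finset.sum_congr rfl fun t _ => by
          rw [comm_mul_right, rel_fe' i j k t, ih3 i j t l]]
        simp only [sub_mul, mul_sub, smul_mul_assoc, mul_smul_comm, mul_smul,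
          Finset.sum_add_distrib, Finset.sum_sub_distrib]
        rw [← Finset.smul_sum, ← Finset.smul_sum, ← Finset.smul_sum,
          kd_collapse' i, kd_collapse j]
        abel
      have P6 : (∑ t, (Uf i j * (Uf k t * fU M t l) - Uf k t * fU M t l * Uf i j))
          = kd j k • (∑ t, Ue i t * fU M t l) + Ue k j * fU M i l
            - ((-1 : ℂ) ^ (M + 1)) • (Uf k j * eU M i l)
            - kd l i • (∑ t, Uf k t * eU M t j) := by
        rw [Finset.sum_congr rfl fun t _ => by
          rw [acom1, rel_ff i j k t, ih4 i j t l]]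
        simp only [sub_mul, mul_sub, mul_add, add_mul, smul_mul_assoc, mul_smul_comm,
          mul_smul, Finset.sum_add_distrib, Finset.sum_sub_distrib]
        rw [← Finset.smul_sum, ← Finset.smul_sum, ← Finset.smul_sum,
          kd_collapse' i, kd_collapse j]
        abel
      have P7 : (∑ t, (Uf i j * (Ue k t * fU M t l) + Ue k t * fU M t l * Uf i j))
          = kd j k • (∑ t, Uf i t * fU M t l) - Uf k j * fU M i l
            + ((-1 : ℂ) ^ (M + 1)) • (Ue k j * eU M i l)
            + kd l i • (∑ t, Ue k t * eU M t j) := by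
        rw [Finset.sum_congr rfl fun t _ => by
          rw [acom2, rel_fe' i j k t, ih4 i j t l]]
        simp only [sub_mul, mul_sub, mul_add, add_mul, smul_mul_assoc, mul_smul_comm,
          mul_smul, Finset.sum_add_distrib, Finset.sum_sub_distrib]
        rw [← Finset.smul_sum, ← Finset.smul_sum, ← Finset.smul_sum,
          kd_collapse' i, kd_collapse j]
        abel
      have P8 : (∑ t, (Uf i j * (Uf k t * eU M t l) + Uf k t * eU M t l * Uf i j))
          = kd j k • (∑ t, Ue i t * eU M t l) + Ue k j * eU M i l
            - ((-1 : ℂ) ^ (M + 1)) • (Uf k j * fU M i l)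
            + kd l i • (∑ t, Uf k t * fU M t j) := by
        rw [Finset.sum_congr rfl fun t _ => by
          rw [acom3, rel_ff i j k t, ih3 i j t l]]
        simp only [sub_mul, mul_sub, mul_add, add_mul, smul_mul_assoc, mul_smul_comm,
          mul_smul, Finset.sum_add_distrib, Finset.sum_sub_distrib]
        rw [← Finset.smul_sum, ← Finset.smul_sum, ← Finset.smul_sum,
          kd_collapse' i, kd_collapse j]
        abel
      refine ⟨?_, ?_, ?_, ?_⟩
      · rw [eU_succ M k l, eU_succ M i l, eU_succ M k j]
        have L : Ue i j * ((∑ t, Ue k t * eU M t l) + (-1 : ℂ) ^ M • ∑ t, Uf k t * fU M t l)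
            - ((∑ t, Ue k t * eU M t l) + (-1 : ℂ) ^ M • ∑ t, Uf k t * fU M t l) * Ue i j
            = (∑ t, (Ue i j * (Ue k t * eU M t l) - Ue k t * eU M t l * Ue i j))
              + (-1 : ℂ) ^ M •
                (∑ t, (Ue i j * (Uf k t * fU M t l) - Uf k t * fU M t l * Ue i j)) := by
          simp only [mul_add, add_mul, Finset.mul_sum, Finset.sum_mul, mul_smul_comm,
            smul_mul_assoc, smul_sub, Finset.sum_sub_distrib]
          abel
        rw [L, P1, P2]
        module
      · rw [fU_succ M k l, fU_succ M i l, fU_succ M k j]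
        have L : Ue i j * ((∑ t, Ue k t * fU M t l) + (-1 : ℂ) ^ M • ∑ t, Uf k t * eU M t l)
            - ((∑ t, Ue k t * fU M t l) + (-1 : ℂ) ^ M • ∑ t, Uf k t * eU M t l) * Ue i j
            = (∑ t, (Ue i j * (Ue k t * fU M t l) - Ue k t * fU M t l * Ue i j))
              + (-1 : ℂ) ^ M •
                (∑ t, (Ue i j * (Uf k t * eU M t l) - Uf k t * eU M t l * Ue i j)) := by
          simp only [mul_add, add_mul, Finset.mul_sum, Finset.sum_mul, mul_smul_comm,
            smul_mul_assoc, smul_sub, Finset.sum_sub_distrib]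
          abel
        rw [L, P3, P4]
        module
      · rw [eU_succ M k l, fU_succ M i l, fU_succ M k j]
        have L : Uf i j * ((∑ t, Ue k t * eU M t l) + (-1 : ℂ) ^ M • ∑ t, Uf k t * fU M t l)
            - ((∑ t, Ue k t * eU M t l) + (-1 : ℂ) ^ M • ∑ t, Uf k t * fU M t l) * Uf i j
            = (∑ t, (Uf i j * (Ue k t * eU M t l) - Ue k t * eU M t l * Uf i j))
              + (-1 : ℂ) ^ M •
                (∑ t, (Uf i j * (Uf k t * fU M t l) - Uf k t * fU M t l * Uf i j)) := by
          simp only [mul_add, add_mul, Finset.mul_sum, Finset.sum_mul, mul_smul_comm,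
            smul_mul_assoc, smul_sub, Finset.sum_sub_distrib]
          abel
        rw [L, P5, P6]
        have e2 : ((-1 : ℂ)) ^ (M + 1 + 1) = ((-1 : ℂ)) ^ M := by ring
        have e1 : ((-1 : ℂ)) ^ (M + 1) = -((-1 : ℂ)) ^ M := by ring
        rw [e2, e1]
        rcases Nat.even_or_odd M with hM | hM
        · rw [hM.neg_one_pow]; module
        · rw [hM.neg_one_pow]; module
      · rw [fU_succ M k l, eU_succ M i l, eU_succ M k j]
        have L : Uf i j * ((∑ t, Ue k t * fU M t l) + (-1 : ℂ) ^ M • ∑ t, Uf k t * eU M t l)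
            + ((∑ t, Ue k t * fU M t l) + (-1 : ℂ) ^ M • ∑ t, Uf k t * eU M t l) * Uf i j
            = (∑ t, (Uf i j * (Ue k t * fU M t l) + Ue k t * fU M t l * Uf i j))
              + (-1 : ℂ) ^ M •
                (∑ t, (Uf i j * (Uf k t * eU M t l) + Uf k t * eU M t l * Uf i j)) := by
          simp only [mul_add, add_mul, Finset.mul_sum, Finset.sum_mul, mul_smul_comm,
            smul_mul_assoc, smul_add, Finset.sum_add_distrib]
          abel
        rw [L, P7, P8]
        have e2 : ((-1 : ℂ)) ^ (M + 1 + 1) = ((-1 : ℂ)) ^ M := by ring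
        have e1 : ((-1 : ℂ)) ^ (M + 1) = -((-1 : ℂ)) ^ M := by ring
        rw [e2, e1]
        rcases Nat.even_or_odd M with hM | hM
        · rw [hM.neg_one_pow]; module
        · rw [hM.neg_one_pow]; module


end Aux7


section Aux7b

variable {n l : ℕ}

lemma kd_self (i : Fin n) : kd i i = 1 := by simp [kd]

lemma bidx_val (h : l ∣ n) (p : Fin (n / l)) (a : Fin l) :
    (bidx h p a).val = l * p.val + a.val := rfl

lemma bidx_inj (h : l ∣ n) {p q : Fin (n / l)} {a b : Fin l}
    (he : bidx h p a = bidx h q b) : p = q ∧ a = b := by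
  have hv : l * p.val + a.val = l * q.val + b.val := congrArg Fin.val he
  have ha := a.isLt; have hb := b.isLt
  have hpq : p.val = q.val := by
    rcases Nat.lt_trichotomy p.val q.val with hlt | heq | hgt
    · nlinarith [Nat.mul_le_mul_left l (Nat.succ_le_of_lt hlt)]
    · exact heq
    · nlinarith [Nat.mul_le_mul_left l (Nat.succ_le_of_lt hgt)]
  have hv2 : l * q.val + a.val = l * q.val + b.val := by rw [hpq] at hv; exact hv
  exact ⟨Fin.ext hpq, Fin.ext (Nat.add_left_cancel hv2)⟩

lemma bidx_surj (hl : 0 < l) (h : l ∣ n) (t : Fin n) :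
    ∃ (p : Fin (n / l)) (a : Fin l), t = bidx h p a := by
  obtain ⟨c, hc⟩ := h
  have ht := t.isLt
  have hdiv : t.val / l < n / l := by
    apply Nat.div_lt_div_of_lt_of_dvd ⟨c, hc⟩ ht
  refine ⟨⟨t.val / l, hdiv⟩, ⟨t.val % l, Nat.mod_lt _ hl⟩, ?_⟩
  apply Fin.ext
  show t.val = l * (t.val / l) + t.val % l
  exact (Nat.div_add_mod t.val l).symm

lemma bidx_mk_congr (h : l ∣ n) (p : Fin (n / l)) {x y : ℕ} (hx : x < l) (hy : y < l)
    (hxy : x = y) : bidx h p ⟨x, hx⟩ = bidx h p ⟨y, hy⟩ := by subst hxy; rfl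

lemma Ue_congr {i i' j j' : Fin n} (hi : i = i') (hj : j = j') : Ue i j = Ue i' j' := by
  rw [hi, hj]

lemma Uf_congr {i i' j j' : Fin n} (hi : i = i') (hj : j = j') : Uf i j = Uf i' j' := by
  rw [hi, hj]

lemma bidx_ne_of_pos_ne (h : l ∣ n) {p q : Fin (n / l)} {a b : Fin l}
    (hab : a ≠ b) : bidx h p a ≠ bidx h q b := by
  intro he; exact hab (bidx_inj h he).2

/-! Ichi lemmas -/

lemma ichi_gen_e (h : l ∣ n) (p q : Fin (n / l)) (a b : Fin l) (hba : b.val < a.val) :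
    Ue (bidx h p a) (bidx h q b) -
      algebraMap ℂ (UQ n) (if a.val = b.val + 1 ∧ p = q then 1 else 0) ∈ Ichi n l h :=
  Submodule.subset_span ⟨p, q, a, b, hba, Or.inl rfl⟩

lemma ichi_gen_f (h : l ∣ n) (p q : Fin (n / l)) (a b : Fin l) (hba : b.val < a.val) :
    Uf (bidx h p a) (bidx h q b) ∈ Ichi n l h := by
  have : Uf (bidx h p a) (bidx h q b) - 0 ∈ Ichi n l h := by
    have : (Uf (bidx h p a) (bidx h q b) : UQ n) ∈ mSet n l h :=
      ⟨p, q, a, b, hba, Or.inr rfl⟩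
    rw [sub_zero]; exact Submodule.subset_span this
  simpa using this

lemma ichi_mul_left (h : l ∣ n) (x : UQ n) {z : UQ n} (hz : z ∈ Ichi n l h) :
    x * z ∈ Ichi n l h := by
  simpa [smul_eq_mul] using Submodule.smul_mem (Ichi n l h) x hz

lemma mul_ue_mem_ichi (h : l ∣ n) (X : UQ n) (p q : Fin (n / l)) (a b : Fin l)
    (hba : b.val < a.val) :
    X * Ue (bidx h p a) (bidx h q b) -
      (if a.val = b.val + 1 ∧ p = q then X else 0) ∈ Ichi n l h := by
  have h1 := ichi_mul_left h X (ichi_gen_e h p q a b hba)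
  have h2 : X * (Ue (bidx h p a) (bidx h q b) -
      algebraMap ℂ (UQ n) (if a.val = b.val + 1 ∧ p = q then 1 else 0))
      = X * Ue (bidx h p a) (bidx h q b) -
        (if a.val = b.val + 1 ∧ p = q then X else 0) := by
    rw [mul_sub]
    congr 1
    split_ifs <;> simp
  rwa [h2] at h1

lemma mul_uf_mem_ichi (h : l ∣ n) (X : UQ n) (p q : Fin (n / l)) (a b : Fin l)
    (hba : b.val < a.val) :
    X * Uf (bidx h p a) (bidx h q b) ∈ Ichi n l h :=
  ichi_mul_left h X (ichi_gen_f h p q a b hba)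

/-! LowSpan lemmas -/

lemma low_mono (h : l ∣ n) {D₁ W₁ D₂ W₂ : ℕ} (hcond : D₁ < D₂ ∨ (D₁ ≤ D₂ ∧ W₁ ≤ W₂)) :
    LowSpan n l h D₁ W₁ ≤ LowSpan n l h D₂ W₂ := by
  apply Submodule.span_mono
  rintro x ⟨L, hL, hx, hc⟩
  exact ⟨L, hL, hx, by omega⟩

lemma low_zero_bot (h : l ∣ n) : LowSpan n l h 0 0 = ⊥ := by
  rw [LowSpan, Submodule.span_eq_bot]
  rintro x ⟨L, hL, hx, hc⟩
  omega

lemma one_mem_low (h : l ∣ n) {D W : ℕ} (hD : 0 < D) : (1 : UQ n) ∈ LowSpan n l h D W :=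
  Submodule.subset_span ⟨[], by simp, by simp, by simp; omega⟩

lemma gen_mem_low (h : l ∣ n) {D W : ℕ} (d : Bool × Fin (n / l) × Fin (n / l) × Fin l × Fin l)
    (hd : d.2.2.2.1.val ≤ d.2.2.2.2.val)
    (hcond : pgDeg d < D ∨ (pgDeg d ≤ D ∧ pgWt d < W)) :
    pgElem h d ∈ LowSpan n l h D W :=
  Submodule.subset_span ⟨[d], by simpa using hd, by simp, by simpa using hcond⟩

lemma gen2_mem_low (h : l ∣ n) {D W : ℕ}
    (d₁ d₂ : Bool × Fin (n / l) × Fin (n / l) × Fin l × Fin l)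
    (hd₁ : d₁.2.2.2.1.val ≤ d₁.2.2.2.2.val) (hd₂ : d₂.2.2.2.1.val ≤ d₂.2.2.2.2.val)
    (hcond : pgDeg d₁ + pgDeg d₂ < D ∨
      (pgDeg d₁ + pgDeg d₂ ≤ D ∧ pgWt d₁ + pgWt d₂ < W)) :
    pgElem h d₁ * pgElem h d₂ ∈ LowSpan n l h D W := by
  refine Submodule.subset_span ⟨[d₁, d₂], ?_, by simp [mul_assoc], ?_⟩
  · intro d hd
    simp only [List.mem_cons, List.mem_singleton, List.not_mem_nil, or_false] at hd
    rcases hd with rfl | rfl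
    · exact hd₁
    · exact hd₂
  · simpa using hcond

lemma gen_mul_low_mem (h : l ∣ n) {D W : ℕ}
    (d : Bool × Fin (n / l) × Fin (n / l) × Fin l × Fin l)
    (hd : d.2.2.2.1.val ≤ d.2.2.2.2.val) {x : UQ n} (hx : x ∈ LowSpan n l h D W) :
    pgElem h d * x ∈ LowSpan n l h (D + pgDeg d) (W + pgWt d) := by
  induction hx using Submodule.span_induction with
  | mem y hy =>
      obtain ⟨L, hL, hyx, hc⟩ := hy
      refine Submodule.subset_span ⟨d :: L, ?_, ?_, ?_⟩
      · intro e he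
        rcases List.mem_cons.mp he with rfl | he'
        · exact hd
        · exact hL _ he'
      · simp [hyx]
      · simp only [List.map_cons, List.sum_cons]
        omega
  | zero => simp
  | add y z _ _ hy hz => rw [mul_add]; exact Submodule.add_mem _ hy hz
  | smul c y _ hy => rw [mul_smul_comm]; exact Submodule.smul_mem _ c hy

lemma Ue_eq_pgElem (h : l ∣ n) (p q : Fin (n / l)) (a b : Fin l) :
    Ue (bidx h p a) (bidx h q b) = pgElem h (false, p, q, a, b) := rfl

lemma Uf_eq_pgElem (h : l ∣ n) (p q : Fin (n / l)) (a b : Fin l) :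
    Uf (bidx h p a) (bidx h q b) = pgElem h (true, p, q, a, b) := rfl

lemma pgDeg_mk {m : ℕ} (b : Bool) (p q : Fin m) (a c : Fin l) :
    pgDeg (b, p, q, a, c) = 2 * (c.val - a.val) + 2 := rfl

lemma pgWt_mk {m : ℕ} (b : Bool) (p q : Fin m) (a c : Fin l) :
    pgWt (b, p, q, a, c) = 2 * (c.val - a.val) := rfl

/-! The combined submodule -/

def SMod (n l : ℕ) (h : l ∣ n) (D W : ℕ) : Submodule ℂ (UQ n) :=
  LowSpan n l h D W ⊔ (Ichi n l h).restrictScalars ℂ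

lemma ichi_mem_smod (h : l ∣ n) {D W : ℕ} {z : UQ n} (hz : z ∈ Ichi n l h) :
    z ∈ SMod n l h D W :=
  Submodule.mem_sup_right hz

lemma low_mem_smod (h : l ∣ n) {D W : ℕ} {z : UQ n} (hz : z ∈ LowSpan n l h D W) :
    z ∈ SMod n l h D W :=
  Submodule.mem_sup_left hz

lemma smod_mono (h : l ∣ n) {D₁ W₁ D₂ W₂ : ℕ}
    (hcond : D₁ < D₂ ∨ (D₁ ≤ D₂ ∧ W₁ ≤ W₂)) :
    SMod n l h D₁ W₁ ≤ SMod n l h D₂ W₂ :=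
  sup_le_sup_right (low_mono h hcond) _

lemma smod_zero_eq (h : l ∣ n) {z : UQ n} (hz : z ∈ SMod n l h 0 0) : z ∈ Ichi n l h := by
  rw [SMod, low_zero_bot, bot_sup_eq] at hz
  exact hz

end Aux7b


section Aux7c

variable {n l : ℕ}

/-- `∑_{i<r} e_{(s,i),(q,i+k)}`. -/
def AeSum (h : l ∣ n) (q s : Fin (n / l)) (k r : ℕ) : UQ n :=
  ∑ i ∈ Finset.range r,
    if hi : i + k < l then Ue (bidx h s ⟨i, by omega⟩) (bidx h q ⟨i + k, hi⟩) else 0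

/-- `∑_{i<r} (-1)^{i+k} f_{(s,i),(q,i+k)}`. -/
def AfSum (h : l ∣ n) (q s : Fin (n / l)) (k r : ℕ) : UQ n :=
  ∑ i ∈ Finset.range r,
    if hi : i + k < l then
      ((-1 : ℂ) ^ (i + k)) • Uf (bidx h s ⟨i, by omega⟩) (bidx h q ⟨i + k, hi⟩)
    else 0

/-- Top-weight target for `e^{(M)}` at row `(s, a)` (column block `q`, position `0`). -/
def AeT (h : l ∣ n) (q : Fin (n / l)) (M : ℕ) (s : Fin (n / l)) (a : ℕ) : UQ n :=
  if M < a then 0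
  else if M = a then kd s q • (1 : UQ n)
  else AeSum h q s (M - a - 1) (min (a + 1) (l - (M - a - 1)))

/-- Top-weight target for `f^{(M)}` at row `(s, a)`. -/
def AfT (h : l ∣ n) (q : Fin (n / l)) (M : ℕ) (s : Fin (n / l)) (a : ℕ) : UQ n :=
  if M ≤ a then 0
  else AfSum h q s (M - a - 1) (min (a + 1) (l - (M - a - 1)))

variable (h : l ∣ n) (q : Fin (n / l))

lemma AeSum_succ (s : Fin (n / l)) (k r : ℕ) (hrk : r + k < l) :
    AeSum h q s k (r + 1) = AeSum h q s k r +
      Ue (bidx h s ⟨r, by omega⟩) (bidx h q ⟨r + k, hrk⟩) := by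
  rw [AeSum, Finset.sum_range_succ, dif_pos hrk]; rfl

lemma AfSum_succ (s : Fin (n / l)) (k r : ℕ) (hrk : r + k < l) :
    AfSum h q s k (r + 1) = AfSum h q s k r +
      ((-1 : ℂ) ^ (r + k)) • Uf (bidx h s ⟨r, by omega⟩) (bidx h q ⟨r + k, hrk⟩) := by
  rw [AfSum, Finset.sum_range_succ, dif_pos hrk]; rfl

lemma AeT_lt {M a : ℕ} (s : Fin (n / l)) (hMa : M < a) : AeT h q M s a = 0 := by
  simp [AeT, hMa]

lemma AeT_eq {M a : ℕ} (s : Fin (n / l)) (hMa : M = a) :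
    AeT h q M s a = kd s q • (1 : UQ n) := by
  simp [AeT, hMa]

lemma AeT_gt {M a : ℕ} (s : Fin (n / l)) (hMa : a < M) :
    AeT h q M s a = AeSum h q s (M - a - 1) (min (a + 1) (l - (M - a - 1))) := by
  rw [AeT, if_neg (by omega), if_neg (by omega)]

lemma AfT_le {M a : ℕ} (s : Fin (n / l)) (hMa : M ≤ a) : AfT h q M s a = 0 := by
  simp [AfT, hMa]

lemma AfT_gt {M a : ℕ} (s : Fin (n / l)) (hMa : a < M) :
    AfT h q M s a = AfSum h q s (M - a - 1) (min (a + 1) (l - (M - a - 1))) := by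
  rw [AfT, if_neg (by omega)]

lemma AeT_row_zero (s : Fin (n / l)) (M : ℕ) (hl : 0 < l) :
    AeT h q (M + 1) s 0 =
      (if hM : M < l then Ue (bidx h s ⟨0, hl⟩) (bidx h q ⟨M, hM⟩) else 0) := by
  rw [AeT_gt h q s (by omega)]
  have hk : M + 1 - 0 - 1 = M := by omega
  rw [hk]
  by_cases hM : M < l
  · have hmin : min (0 + 1) (l - M) = 0 + 1 := by omega
    rw [hmin, AeSum_succ h q s M 0 (by omega), dif_pos hM]
    have h0 : AeSum h q s M 0 = 0 := by simp [AeSum]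
    rw [h0, zero_add]
    exact Ue_congr rfl (bidx_mk_congr h q _ _ (by omega))
  · have hmin : min (0 + 1) (l - M) = 0 := by omega
    rw [hmin, dif_neg hM]
    simp [AeSum]

lemma AfT_row_zero (s : Fin (n / l)) (M : ℕ) (hl : 0 < l) :
    AfT h q (M + 1) s 0 =
      (if hM : M < l then
        ((-1 : ℂ) ^ M) • Uf (bidx h s ⟨0, hl⟩) (bidx h q ⟨M, hM⟩) else 0) := by
  rw [AfT_gt h q s (by omega)]
  have hk : M + 1 - 0 - 1 = M := by omega
  rw [hk]
  by_cases hM : M < l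
  · have hmin : min (0 + 1) (l - M) = 0 + 1 := by omega
    rw [hmin, AfSum_succ h q s M 0 (by omega), dif_pos hM]
    have h0 : AfSum h q s M 0 = 0 := by simp [AfSum]
    rw [h0, zero_add]
    congr 1
    · rw [Nat.zero_add]
    · exact Uf_congr rfl (bidx_mk_congr h q _ _ (by omega))
  · have hmin : min (0 + 1) (l - M) = 0 := by omega
    rw [hmin, dif_neg hM]
    simp [AfSum]

lemma AeT_succ (s : Fin (n / l)) (M a : ℕ) (hal : a + 1 < l) :
    AeT h q (M + 1) s (a + 1) = AeT h q M s a +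
      (if hM : a + 1 ≤ M ∧ M < l then
        Ue (bidx h s ⟨a + 1, hal⟩) (bidx h q ⟨M, hM.2⟩) else 0) := by
  rcases Nat.lt_trichotomy M a with hMa | hMa | hMa
  · rw [AeT_lt h q s hMa, AeT_lt h q s (by omega : M + 1 < a + 1), zero_add,
      dif_neg (by omega)]
  · subst hMa
    rw [AeT_eq h q s rfl, AeT_eq h q s rfl, dif_neg (by omega), add_zero]
  · rw [AeT_gt h q s (by omega : a + 1 < M + 1), AeT_gt h q s hMa]
    have hk : M + 1 - (a + 1) - 1 = M - a - 1 := by omega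
    rw [hk]
    by_cases hMl : M < l
    · have hmin1 : min (a + 1 + 1) (l - (M - a - 1)) = (a + 1) + 1 := by omega
      have hmin2 : min (a + 1) (l - (M - a - 1)) = a + 1 := by omega
      rw [hmin1, hmin2, AeSum_succ h q s (M - a - 1) (a + 1) (by omega),
        dif_pos (by exact ⟨by omega, hMl⟩)]
      congr 1
      exact Ue_congr (bidx_mk_congr h s _ _ rfl) (bidx_mk_congr h q _ _ (by omega))
    · have hmin1 : min (a + 1 + 1) (l - (M - a - 1)) = l - (M - a - 1) := by omega
      have hmin2 : min (a + 1) (l - (M - a - 1)) = l - (M - a - 1) := by omega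
      rw [hmin1, hmin2, dif_neg (by omega), add_zero]

lemma AfT_succ (s : Fin (n / l)) (M a : ℕ) (hal : a + 1 < l) :
    AfT h q (M + 1) s (a + 1) = AfT h q M s a +
      (if hM : a + 1 ≤ M ∧ M < l then
        ((-1 : ℂ) ^ M) • Uf (bidx h s ⟨a + 1, hal⟩) (bidx h q ⟨M, hM.2⟩) else 0) := by
  rcases Nat.lt_or_ge a M with hMa | hMa
  · rw [AfT_gt h q s (by omega : a + 1 < M + 1), AfT_gt h q s hMa]
    have hk : M + 1 - (a + 1) - 1 = M - a - 1 := by omega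
    rw [hk]
    by_cases hMl : M < l
    · have hmin1 : min (a + 1 + 1) (l - (M - a - 1)) = (a + 1) + 1 := by omega
      have hmin2 : min (a + 1) (l - (M - a - 1)) = a + 1 := by omega
      rw [hmin1, hmin2, AfSum_succ h q s (M - a - 1) (a + 1) (by omega),
        dif_pos (by exact ⟨by omega, hMl⟩)]
      congr 1
      congr 1
      · exact congrArg (fun t => ((-1 : ℂ)) ^ t) (by omega)
      · exact Uf_congr (bidx_mk_congr h s _ _ rfl) (bidx_mk_congr h q _ _ (by omega))
    · have hmin1 : min (a + 1 + 1) (l - (M - a - 1)) = l - (M - a - 1) := by omega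
      have hmin2 : min (a + 1) (l - (M - a - 1)) = l - (M - a - 1) := by omega
      rw [hmin1, hmin2, dif_neg (by omega), add_zero]
  · rw [AfT_le h q s hMa, AfT_le h q s (by omega : M + 1 ≤ a + 1), zero_add,
      dif_neg (by omega)]

lemma AeSum_mem_low (s : Fin (n / l)) {k r D W : ℕ} (hD : 2 * k + 2 < D) :
    AeSum h q s k r ∈ LowSpan n l h D W := by
  apply Submodule.sum_mem
  intro i _
  split_ifs with hi
  · rw [Ue_eq_pgElem]
    apply gen_mem_low h _ (by simp)
    left
    rw [pgDeg_mk]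
    simp only
    omega
  · exact Submodule.zero_mem _

lemma AfSum_mem_low (s : Fin (n / l)) {k r D W : ℕ} (hD : 2 * k + 2 < D) :
    AfSum h q s k r ∈ LowSpan n l h D W := by
  apply Submodule.sum_mem
  intro i _
  split_ifs with hi
  · apply Submodule.smul_mem
    rw [Uf_eq_pgElem]
    apply gen_mem_low h _ (by simp)
    left
    rw [pgDeg_mk]
    simp only
    omega
  · exact Submodule.zero_mem _

lemma AeT_mem_low (s : Fin (n / l)) {M a D W : ℕ} (hD : 2 * M < 2 * a + D) :
    AeT h q M s a ∈ LowSpan n l h D W := by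
  rcases Nat.lt_trichotomy M a with hMa | hMa | hMa
  · rw [AeT_lt h q s hMa]; exact Submodule.zero_mem _
  · rw [AeT_eq h q s hMa]
    exact Submodule.smul_mem _ _ (one_mem_low h (by omega))
  · rw [AeT_gt h q s hMa]
    exact AeSum_mem_low h q s (by omega)

lemma AfT_mem_low (s : Fin (n / l)) {M a D W : ℕ} (hD : 2 * M < 2 * a + D) :
    AfT h q M s a ∈ LowSpan n l h D W := by
  rcases Nat.lt_or_ge a M with hMa | hMa
  · rw [AfT_gt h q s hMa]
    exact AfSum_mem_low h q s (by omega)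
  · rw [AfT_le h q s hMa]; exact Submodule.zero_mem _

lemma gen_mul_AeSum_low (bb : Bool) (s s' : Fin (n / l)) (a b : Fin l) {k r D W : ℕ}
    (hab : a.val ≤ b.val)
    (hc1 : (2 * (b.val - a.val) + 2) + (2 * k + 2) ≤ D)
    (hc2 : 2 * (b.val - a.val) + 2 * k < W) :
    pgElem h (bb, s, s', a, b) * AeSum h q s' k r ∈ LowSpan n l h D W := by
  rw [AeSum, Finset.mul_sum]
  apply Submodule.sum_mem
  intro i _
  split_ifs with hi
  · rw [Ue_eq_pgElem]
    apply gen2_mem_low h _ _ hab (by simp)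
    right
    rw [pgDeg_mk, pgDeg_mk, pgWt_mk, pgWt_mk]
    simp only
    omega
  · rw [mul_zero]; exact Submodule.zero_mem _

lemma gen_mul_AfSum_low (bb : Bool) (s s' : Fin (n / l)) (a b : Fin l) {k r D W : ℕ}
    (hab : a.val ≤ b.val)
    (hc1 : (2 * (b.val - a.val) + 2) + (2 * k + 2) ≤ D)
    (hc2 : 2 * (b.val - a.val) + 2 * k < W) :
    pgElem h (bb, s, s', a, b) * AfSum h q s' k r ∈ LowSpan n l h D W := by
  rw [AfSum, Finset.mul_sum]
  apply Submodule.sum_mem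
  intro i _
  split_ifs with hi
  · rw [mul_smul_comm]
    apply Submodule.smul_mem
    rw [Uf_eq_pgElem]
    apply gen2_mem_low h _ _ hab (by simp)
    right
    rw [pgDeg_mk, pgDeg_mk, pgWt_mk, pgWt_mk]
    simp only
    omega
  · rw [mul_zero]; exact Submodule.zero_mem _

end Aux7c



section Aux7d

variable {n l : ℕ}

lemma kd_of_ne {i j : Fin n} (hij : i ≠ j) : kd i j = 0 := by simp [kd, hij]

lemma bidx_ne_w (hl : 0 < l) (h : l ∣ n) (s q : Fin (n / l)) (a : Fin l)
    (ha : a.val ≠ 0) : bidx h q ⟨0, hl⟩ ≠ bidx h s a := by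
  intro he
  have := congrArg Fin.val (bidx_inj h he).2
  simp at this
  omega

/-- Case `b < a`, product `e · e^{(M)}`. -/
lemma mulA_ee (hl : 0 < l) (h : l ∣ n) (q s s' : Fin (n / l)) (M : ℕ) (a b : Fin l)
    (hba : b.val < a.val) :
    Ue (bidx h s a) (bidx h s' b) * eU M (bidx h s' b) (bidx h q ⟨0, hl⟩)
      - (if a.val = b.val + 1 ∧ s = s' then eU M (bidx h s' b) (bidx h q ⟨0, hl⟩) else 0)
      - eU M (bidx h s a) (bidx h q ⟨0, hl⟩) ∈ Ichi n l h := by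
  have hC := (comm_formulas M (bidx h s a) (bidx h s' b) (bidx h s' b)
    (bidx h q ⟨0, hl⟩)).1
  rw [kd_self, kd_of_ne (bidx_ne_w hl h s q a (by omega)), one_smul, zero_smul,
    sub_zero] at hC
  have hXY : Ue (bidx h s a) (bidx h s' b) * eU M (bidx h s' b) (bidx h q ⟨0, hl⟩)
      = eU M (bidx h s' b) (bidx h q ⟨0, hl⟩) * Ue (bidx h s a) (bidx h s' b)
        + eU M (bidx h s a) (bidx h q ⟨0, hl⟩) := by
    rw [← hC]; abel
  rw [hXY]
  have heq : ∀ Y I E : UQ n, Y + E - I - E = Y - I := by intros; abel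
  rw [heq]
  exact mul_ue_mem_ichi h _ s s' a b hba

/-- Case `b < a`, product `e · f^{(M)}`. -/
lemma mulA_ef (hl : 0 < l) (h : l ∣ n) (q s s' : Fin (n / l)) (M : ℕ) (a b : Fin l)
    (hba : b.val < a.val) :
    Ue (bidx h s a) (bidx h s' b) * fU M (bidx h s' b) (bidx h q ⟨0, hl⟩)
      - (if a.val = b.val + 1 ∧ s = s' then fU M (bidx h s' b) (bidx h q ⟨0, hl⟩) else 0)
      - fU M (bidx h s a) (bidx h q ⟨0, hl⟩) ∈ Ichi n l h := by
  have hC := (comm_formulas M (bidx h s a) (bidx h s' b) (bidx h s' b)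
    (bidx h q ⟨0, hl⟩)).2.1
  rw [kd_self, kd_of_ne (bidx_ne_w hl h s q a (by omega)), one_smul, zero_smul,
    sub_zero] at hC
  have hXY : Ue (bidx h s a) (bidx h s' b) * fU M (bidx h s' b) (bidx h q ⟨0, hl⟩)
      = fU M (bidx h s' b) (bidx h q ⟨0, hl⟩) * Ue (bidx h s a) (bidx h s' b)
        + fU M (bidx h s a) (bidx h q ⟨0, hl⟩) := by
    rw [← hC]; abel
  rw [hXY]
  have heq : ∀ Y I E : UQ n, Y + E - I - E = Y - I := by intros; abel
  rw [heq]
  exact mul_ue_mem_ichi h _ s s' a b hba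

/-- Case `b < a`, product `f · e^{(M)}`. -/
lemma mulA_fe (hl : 0 < l) (h : l ∣ n) (q s s' : Fin (n / l)) (M : ℕ) (a b : Fin l)
    (hba : b.val < a.val) :
    Uf (bidx h s a) (bidx h s' b) * eU M (bidx h s' b) (bidx h q ⟨0, hl⟩)
      - ((-1 : ℂ) ^ (M + 1)) • fU M (bidx h s a) (bidx h q ⟨0, hl⟩) ∈ Ichi n l h := by
  have hC := (comm_formulas M (bidx h s a) (bidx h s' b) (bidx h s' b)
    (bidx h q ⟨0, hl⟩)).2.2.1
  rw [kd_self, kd_of_ne (bidx_ne_w hl h s q a (by omega)), mul_one, zero_smul,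
    sub_zero] at hC
  have hXY : Uf (bidx h s a) (bidx h s' b) * eU M (bidx h s' b) (bidx h q ⟨0, hl⟩)
      - ((-1 : ℂ) ^ (M + 1)) • fU M (bidx h s a) (bidx h q ⟨0, hl⟩)
      = eU M (bidx h s' b) (bidx h q ⟨0, hl⟩) * Uf (bidx h s a) (bidx h s' b) := by
    rw [← hC]; abel
  rw [hXY]
  exact mul_uf_mem_ichi h _ s s' a b hba

/-- Case `b < a`, product `f · f^{(M)}`. -/
lemma mulA_ff (hl : 0 < l) (h : l ∣ n) (q s s' : Fin (n / l)) (M : ℕ) (a b : Fin l)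
    (hba : b.val < a.val) :
    Uf (bidx h s a) (bidx h s' b) * fU M (bidx h s' b) (bidx h q ⟨0, hl⟩)
      - ((-1 : ℂ) ^ (M + 1)) • eU M (bidx h s a) (bidx h q ⟨0, hl⟩) ∈ Ichi n l h := by
  have hC := (comm_formulas M (bidx h s a) (bidx h s' b) (bidx h s' b)
    (bidx h q ⟨0, hl⟩)).2.2.2
  rw [kd_self, kd_of_ne (bidx_ne_w hl h s q a (by omega)), mul_one, zero_smul,
    add_zero] at hC
  have hXY : Uf (bidx h s a) (bidx h s' b) * fU M (bidx h s' b) (bidx h q ⟨0, hl⟩)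
      - ((-1 : ℂ) ^ (M + 1)) • eU M (bidx h s a) (bidx h q ⟨0, hl⟩)
      = -(fU M (bidx h s' b) (bidx h q ⟨0, hl⟩) * Uf (bidx h s a) (bidx h s' b)) := by
    rw [← hC]; abel
  rw [hXY]
  exact Submodule.neg_mem _ (mul_uf_mem_ichi h _ s s' a b hba)

/-- Case `b ≥ a`, product with `e^{(M)}`. -/
lemma mulB_e (hl : 0 < l) (h : l ∣ n) (q s s' : Fin (n / l)) (M : ℕ) (a b : Fin l)
    (hab : a.val ≤ b.val) (bb : Bool)
    (ih : eU M (bidx h s' b) (bidx h q ⟨0, hl⟩) - AeT h q M s' b.val ∈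
      SMod n l h (2 * M - 2 * b.val) (2 * M - 2 * b.val - 2)) :
    pgElem h (bb, s, s', a, b) * eU M (bidx h s' b) (bidx h q ⟨0, hl⟩)
      - (if b.val = M then kd s' q • pgElem h (bb, s, s', a, b) else 0)
      ∈ SMod n l h (2 * (M + 1) - 2 * a.val) (2 * (M + 1) - 2 * a.val - 2) := by
  rcases Nat.lt_trichotomy M b.val with hMb | hMb | hMb
  · rw [if_neg (by omega), sub_zero]
    have h0 : 2 * M - 2 * b.val = 0 := by omega
    rw [h0] at ih
    norm_num at ih
    rw [AeT_lt h q s' hMb, sub_zero] at ih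
    exact ichi_mem_smod h (ichi_mul_left h _ (smod_zero_eq h ih))
  · rw [if_pos hMb.symm]
    have h0 : 2 * M - 2 * b.val = 0 := by omega
    rw [h0] at ih
    norm_num at ih
    rw [AeT_eq h q s' hMb] at ih
    have hI := smod_zero_eq h ih
    have heq : pgElem h (bb, s, s', a, b) * eU M (bidx h s' b) (bidx h q ⟨0, hl⟩)
        - kd s' q • pgElem h (bb, s, s', a, b)
        = pgElem h (bb, s, s', a, b) *
            (eU M (bidx h s' b) (bidx h q ⟨0, hl⟩) - kd s' q • (1 : UQ n)) := by
      rw [mul_sub, mul_smul_comm, mul_one]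
    rw [heq]
    exact ichi_mem_smod h (ichi_mul_left h _ hI)
  · rw [if_neg (by omega), sub_zero]
    obtain ⟨y, hy, z, hz, hyz⟩ := Submodule.mem_sup.mp ih
    have heq : eU M (bidx h s' b) (bidx h q ⟨0, hl⟩) = AeT h q M s' b.val + y + z := by
      have := sub_eq_iff_eq_add'.mp hyz.symm
      rw [this]; abel
    rw [heq]; simp only [mul_add]
    refine add_mem (add_mem ?_ ?_) (ichi_mem_smod h (ichi_mul_left h _ hz))
    · rw [AeT_gt h q s' hMb]
      exact low_mem_smod h
        (gen_mul_AeSum_low h q bb s s' a b hab (by omega) (by omega))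
    · apply low_mem_smod h
      have h2 := gen_mul_low_mem h (bb, s, s', a, b) hab hy
      rw [pgDeg_mk, pgWt_mk] at h2
      exact low_mono h (Or.inr ⟨by omega, by omega⟩) h2

/-- Case `b ≥ a`, product with `f^{(M)}`. -/
lemma mulB_f (hl : 0 < l) (h : l ∣ n) (q s s' : Fin (n / l)) (M : ℕ) (a b : Fin l)
    (hab : a.val ≤ b.val) (bb : Bool)
    (ih : fU M (bidx h s' b) (bidx h q ⟨0, hl⟩) - AfT h q M s' b.val ∈
      SMod n l h (2 * M - 2 * b.val) (2 * M - 2 * b.val - 2)) :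
    pgElem h (bb, s, s', a, b) * fU M (bidx h s' b) (bidx h q ⟨0, hl⟩)
      ∈ SMod n l h (2 * (M + 1) - 2 * a.val) (2 * (M + 1) - 2 * a.val - 2) := by
  rcases le_or_gt M b.val with hMb | hMb
  · have h0 : 2 * M - 2 * b.val = 0 := by omega
    rw [h0] at ih
    norm_num at ih
    rw [AfT_le h q s' hMb, sub_zero] at ih
    exact ichi_mem_smod h (ichi_mul_left h _ (smod_zero_eq h ih))
  · obtain ⟨y, hy, z, hz, hyz⟩ := Submodule.mem_sup.mp ih
    have heq : fU M (bidx h s' b) (bidx h q ⟨0, hl⟩) = AfT h q M s' b.val + y + z := by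
      have := sub_eq_iff_eq_add'.mp hyz.symm
      rw [this]; abel
    rw [heq]; simp only [mul_add]
    refine add_mem (add_mem ?_ ?_) (ichi_mem_smod h (ichi_mul_left h _ hz))
    · rw [AfT_gt h q s' hMb]
      exact low_mem_smod h
        (gen_mul_AfSum_low h q bb s s' a b hab (by omega) (by omega))
    · apply low_mem_smod h
      have h2 := gen_mul_low_mem h (bb, s, s', a, b) hab hy
      rw [pgDeg_mk, pgWt_mk] at h2
      exact low_mono h (Or.inr ⟨by omega, by omega⟩) h2

end Aux7d


section Aux7e

variable {n l : ℕ}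

/-- The element `eU M (bidx s a) w` lies in `SMod` at level `M+1`. -/
lemma eU_mem_smod (hl : 0 < l) (h : l ∣ n) (q s : Fin (n / l)) (M : ℕ) (a : Fin l)
    (ih : eU M (bidx h s a) (bidx h q ⟨0, hl⟩) - AeT h q M s a.val ∈
      SMod n l h (2 * M - 2 * a.val) (2 * M - 2 * a.val - 2)) :
    eU M (bidx h s a) (bidx h q ⟨0, hl⟩) ∈
      SMod n l h (2 * (M + 1) - 2 * a.val) (2 * (M + 1) - 2 * a.val - 2) := by
  have heq : eU M (bidx h s a) (bidx h q ⟨0, hl⟩)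
      = (eU M (bidx h s a) (bidx h q ⟨0, hl⟩) - AeT h q M s a.val) + AeT h q M s a.val := by
    abel
  rw [heq]
  exact add_mem (smod_mono h (Or.inr ⟨by omega, by omega⟩) ih)
    (low_mem_smod h (AeT_mem_low h q s (by omega)))

lemma fU_mem_smod (hl : 0 < l) (h : l ∣ n) (q s : Fin (n / l)) (M : ℕ) (a : Fin l)
    (ih : fU M (bidx h s a) (bidx h q ⟨0, hl⟩) - AfT h q M s a.val ∈
      SMod n l h (2 * M - 2 * a.val) (2 * M - 2 * a.val - 2)) :
    fU M (bidx h s a) (bidx h q ⟨0, hl⟩) ∈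
      SMod n l h (2 * (M + 1) - 2 * a.val) (2 * (M + 1) - 2 * a.val - 2) := by
  have heq : fU M (bidx h s a) (bidx h q ⟨0, hl⟩)
      = (fU M (bidx h s a) (bidx h q ⟨0, hl⟩) - AfT h q M s a.val) + AfT h q M s a.val := by
    abel
  rw [heq]
  exact add_mem (smod_mono h (Or.inr ⟨by omega, by omega⟩) ih)
    (low_mem_smod h (AfT_mem_low h q s (by omega)))

theorem stepE (hl : 0 < l) (h : l ∣ n) (q s : Fin (n / l)) (M : ℕ) (a : Fin l)
    (ihE : ∀ (s' : Fin (n / l)) (b : Fin l),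
      eU M (bidx h s' b) (bidx h q ⟨0, hl⟩) - AeT h q M s' b.val ∈
        SMod n l h (2 * M - 2 * b.val) (2 * M - 2 * b.val - 2))
    (ihF : ∀ (s' : Fin (n / l)) (b : Fin l),
      fU M (bidx h s' b) (bidx h q ⟨0, hl⟩) - AfT h q M s' b.val ∈
        SMod n l h (2 * M - 2 * b.val) (2 * M - 2 * b.val - 2)) :
    eU (M + 1) (bidx h s a) (bidx h q ⟨0, hl⟩)
      - (if 1 ≤ a.val then
          eU M (bidx h s ⟨a.val - 1, lt_of_le_of_lt (Nat.sub_le _ _) a.isLt⟩)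
            (bidx h q ⟨0, hl⟩) else 0)
      - (if hM : a.val ≤ M ∧ M < l then Ue (bidx h s a) (bidx h q ⟨M, hM.2⟩) else 0)
      ∈ SMod n l h (2 * (M + 1) - 2 * a.val) (2 * (M + 1) - 2 * a.val - 2) := by
  rw [eU_succ]
  have hG1sum : (∑ t, (if t = bidx h s ⟨a.val - 1, lt_of_le_of_lt (Nat.sub_le _ _) a.isLt⟩
          ∧ 1 ≤ a.val then eU M t (bidx h q ⟨0, hl⟩) else 0))
      = (if 1 ≤ a.val then
          eU M (bidx h s ⟨a.val - 1, lt_of_le_of_lt (Nat.sub_le _ _) a.isLt⟩)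
            (bidx h q ⟨0, hl⟩) else 0) := by
    by_cases h1a : 1 ≤ a.val
    · simp only [h1a, and_true, if_true]
      rw [Finset.sum_ite_eq' Finset.univ _ (fun t => eU M t (bidx h q ⟨0, hl⟩))]
      simp
    · simp [h1a]
  have hG2sum : (∑ t, (if hM : a.val ≤ M ∧ M < l then
          (if t = bidx h q ⟨M, hM.2⟩ then Ue (bidx h s a) t else 0) else 0))
      = (if hM : a.val ≤ M ∧ M < l then Ue (bidx h s a) (bidx h q ⟨M, hM.2⟩) else 0) := by
    by_cases hM : a.val ≤ M ∧ M < l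
    · simp only [dif_pos hM]
      rw [Finset.sum_ite_eq' Finset.univ _ (fun t => Ue (bidx h s a) t)]
      simp
    · simp [dif_neg hM]
  have hsplit : ((∑ t, Ue (bidx h s a) t * eU M t (bidx h q ⟨0, hl⟩))
        + (-1 : ℂ) ^ M • ∑ t, Uf (bidx h s a) t * fU M t (bidx h q ⟨0, hl⟩))
      - (if 1 ≤ a.val then
          eU M (bidx h s ⟨a.val - 1, lt_of_le_of_lt (Nat.sub_le _ _) a.isLt⟩)
            (bidx h q ⟨0, hl⟩) else 0)
      - (if hM : a.val ≤ M ∧ M < l then Ue (bidx h s a) (bidx h q ⟨M, hM.2⟩) else 0)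
      = (∑ t, (Ue (bidx h s a) t * eU M t (bidx h q ⟨0, hl⟩)
          - (if t = bidx h s ⟨a.val - 1, lt_of_le_of_lt (Nat.sub_le _ _) a.isLt⟩
              ∧ 1 ≤ a.val then eU M t (bidx h q ⟨0, hl⟩) else 0)
          - (if hM : a.val ≤ M ∧ M < l then
              (if t = bidx h q ⟨M, hM.2⟩ then Ue (bidx h s a) t else 0) else 0)))
        + (-1 : ℂ) ^ M • ∑ t, Uf (bidx h s a) t * fU M t (bidx h q ⟨0, hl⟩) := by
    rw [Finset.sum_sub_distrib, Finset.sum_sub_distrib, hG1sum, hG2sum]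
    abel
  rw [hsplit]
  refine add_mem (Submodule.sum_mem _ ?_)
    (Submodule.smul_mem _ _ (Submodule.sum_mem _ ?_))
  · intro t _
    obtain ⟨s', b, rfl⟩ := bidx_surj hl h t
    by_cases hba : b.val < a.val
    · have hG2z : (if hM : a.val ≤ M ∧ M < l then
          (if bidx h s' b = bidx h q ⟨M, hM.2⟩ then Ue (bidx h s a) (bidx h s' b) else 0)
          else 0) = 0 := by
        by_cases hM : a.val ≤ M ∧ M < l
        · rw [dif_pos hM, if_neg]
          intro he
          have := congrArg Fin.val (bidx_inj h he).2
          simp at this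
          omega
        · rw [dif_neg hM]
      have hG1e : (if bidx h s' b = bidx h s ⟨a.val - 1,
            lt_of_le_of_lt (Nat.sub_le _ _) a.isLt⟩ ∧ 1 ≤ a.val then
            eU M (bidx h s' b) (bidx h q ⟨0, hl⟩) else 0)
          = (if a.val = b.val + 1 ∧ s = s' then
              eU M (bidx h s' b) (bidx h q ⟨0, hl⟩) else 0) := by
        apply if_congr _ rfl rfl
        constructor
        · rintro ⟨he, -⟩
          obtain ⟨hs, hb⟩ := bidx_inj h he
          have := congrArg Fin.val hb
          simp at this
          exact ⟨by omega, hs.symm⟩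
        · rintro ⟨hv, hs⟩
          subst hs
          exact ⟨congrArg (bidx h s) (Fin.ext (by simp; omega)), by omega⟩
      rw [hG1e, hG2z, sub_zero]
      have heq : Ue (bidx h s a) (bidx h s' b) * eU M (bidx h s' b) (bidx h q ⟨0, hl⟩)
          - (if a.val = b.val + 1 ∧ s = s' then
              eU M (bidx h s' b) (bidx h q ⟨0, hl⟩) else 0)
          = (Ue (bidx h s a) (bidx h s' b) * eU M (bidx h s' b) (bidx h q ⟨0, hl⟩)
            - (if a.val = b.val + 1 ∧ s = s' then
                eU M (bidx h s' b) (bidx h q ⟨0, hl⟩) else 0)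
            - eU M (bidx h s a) (bidx h q ⟨0, hl⟩))
            + eU M (bidx h s a) (bidx h q ⟨0, hl⟩) := by abel
      rw [heq]
      exact add_mem (ichi_mem_smod h (mulA_ee hl h q s s' M a b hba))
        (eU_mem_smod hl h q s M a (ihE s a))
    · push_neg at hba
      have hG1z : (if bidx h s' b = bidx h s ⟨a.val - 1,
            lt_of_le_of_lt (Nat.sub_le _ _) a.isLt⟩ ∧ 1 ≤ a.val then
            eU M (bidx h s' b) (bidx h q ⟨0, hl⟩) else 0) = 0 := by
        rw [if_neg]
        rintro ⟨he, h1⟩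
        have := congrArg Fin.val (bidx_inj h he).2
        simp at this
        omega
      have hG2e : (if hM : a.val ≤ M ∧ M < l then
          (if bidx h s' b = bidx h q ⟨M, hM.2⟩ then Ue (bidx h s a) (bidx h s' b) else 0)
          else 0)
          = (if b.val = M then kd s' q • Ue (bidx h s a) (bidx h s' b) else 0) := by
        by_cases hM : a.val ≤ M ∧ M < l
        · rw [dif_pos hM]
          by_cases hbM : b.val = M
          · rw [if_pos hbM]
            by_cases hsq : s' = q
            · rw [if_pos (by subst hsq; exact congrArg (bidx h s') (Fin.ext hbM)),
                hsq, kd_self, one_smul]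
            · rw [if_neg (fun he => hsq (bidx_inj h he).1), kd_of_ne hsq, zero_smul]
          · rw [if_neg hbM, if_neg]
            intro he
            have := congrArg Fin.val (bidx_inj h he).2
            simp at this
            omega
        · rw [dif_neg hM, if_neg (fun hbM => hM ⟨by omega, by have := b.isLt; omega⟩)]
      rw [hG1z, hG2e, sub_zero]
      have hB := mulB_e hl h q s s' M a b hba false (ihE s' b)
      simpa only [← Ue_eq_pgElem] using hB
  · intro t _
    obtain ⟨s', b, rfl⟩ := bidx_surj hl h t
    by_cases hba : b.val < a.val
    · have h1 := mulA_ff hl h q s s' M a b hba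
      have heq : Uf (bidx h s a) (bidx h s' b) * fU M (bidx h s' b) (bidx h q ⟨0, hl⟩)
          = (Uf (bidx h s a) (bidx h s' b) * fU M (bidx h s' b) (bidx h q ⟨0, hl⟩)
              - ((-1 : ℂ) ^ (M + 1)) • eU M (bidx h s a) (bidx h q ⟨0, hl⟩))
            + ((-1 : ℂ) ^ (M + 1)) • eU M (bidx h s a) (bidx h q ⟨0, hl⟩) := by abel
      rw [heq]
      exact add_mem (ichi_mem_smod h h1)
        (Submodule.smul_mem _ _ (eU_mem_smod hl h q s M a (ihE s a)))
    · push_neg at hba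
      have hB := mulB_f hl h q s s' M a b hba true (ihF s' b)
      simpa only [← Uf_eq_pgElem] using hB

theorem stepF (hl : 0 < l) (h : l ∣ n) (q s : Fin (n / l)) (M : ℕ) (a : Fin l)
    (ihE : ∀ (s' : Fin (n / l)) (b : Fin l),
      eU M (bidx h s' b) (bidx h q ⟨0, hl⟩) - AeT h q M s' b.val ∈
        SMod n l h (2 * M - 2 * b.val) (2 * M - 2 * b.val - 2))
    (ihF : ∀ (s' : Fin (n / l)) (b : Fin l),
      fU M (bidx h s' b) (bidx h q ⟨0, hl⟩) - AfT h q M s' b.val ∈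
        SMod n l h (2 * M - 2 * b.val) (2 * M - 2 * b.val - 2)) :
    fU (M + 1) (bidx h s a) (bidx h q ⟨0, hl⟩)
      - (if 1 ≤ a.val then
          fU M (bidx h s ⟨a.val - 1, lt_of_le_of_lt (Nat.sub_le _ _) a.isLt⟩)
            (bidx h q ⟨0, hl⟩) else 0)
      - (-1 : ℂ) ^ M •
        (if hM : a.val ≤ M ∧ M < l then Uf (bidx h s a) (bidx h q ⟨M, hM.2⟩) else 0)
      ∈ SMod n l h (2 * (M + 1) - 2 * a.val) (2 * (M + 1) - 2 * a.val - 2) := by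
  rw [fU_succ]
  have hG1sum : (∑ t, (if t = bidx h s ⟨a.val - 1, lt_of_le_of_lt (Nat.sub_le _ _) a.isLt⟩
          ∧ 1 ≤ a.val then fU M t (bidx h q ⟨0, hl⟩) else 0))
      = (if 1 ≤ a.val then
          fU M (bidx h s ⟨a.val - 1, lt_of_le_of_lt (Nat.sub_le _ _) a.isLt⟩)
            (bidx h q ⟨0, hl⟩) else 0) := by
    by_cases h1a : 1 ≤ a.val
    · simp only [h1a, and_true, if_true]
      rw [Finset.sum_ite_eq' Finset.univ _ (fun t => fU M t (bidx h q ⟨0, hl⟩))]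
      simp
    · simp [h1a]
  have hG2sum : (∑ t, (if hM : a.val ≤ M ∧ M < l then
          (if t = bidx h q ⟨M, hM.2⟩ then Uf (bidx h s a) t else 0) else 0))
      = (if hM : a.val ≤ M ∧ M < l then Uf (bidx h s a) (bidx h q ⟨M, hM.2⟩) else 0) := by
    by_cases hM : a.val ≤ M ∧ M < l
    · simp only [dif_pos hM]
      rw [Finset.sum_ite_eq' Finset.univ _ (fun t => Uf (bidx h s a) t)]
      simp
    · simp [dif_neg hM]
  have hsplit : ((∑ t, Ue (bidx h s a) t * fU M t (bidx h q ⟨0, hl⟩))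
        + (-1 : ℂ) ^ M • ∑ t, Uf (bidx h s a) t * eU M t (bidx h q ⟨0, hl⟩))
      - (if 1 ≤ a.val then
          fU M (bidx h s ⟨a.val - 1, lt_of_le_of_lt (Nat.sub_le _ _) a.isLt⟩)
            (bidx h q ⟨0, hl⟩) else 0)
      - (-1 : ℂ) ^ M •
        (if hM : a.val ≤ M ∧ M < l then Uf (bidx h s a) (bidx h q ⟨M, hM.2⟩) else 0)
      = (∑ t, (Ue (bidx h s a) t * fU M t (bidx h q ⟨0, hl⟩)
          - (if t = bidx h s ⟨a.val - 1, lt_of_le_of_lt (Nat.sub_le _ _) a.isLt⟩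
              ∧ 1 ≤ a.val then fU M t (bidx h q ⟨0, hl⟩) else 0)))
        + (-1 : ℂ) ^ M • ∑ t, (Uf (bidx h s a) t * eU M t (bidx h q ⟨0, hl⟩)
          - (if hM : a.val ≤ M ∧ M < l then
              (if t = bidx h q ⟨M, hM.2⟩ then Uf (bidx h s a) t else 0) else 0)) := by
    rw [Finset.sum_sub_distrib, Finset.sum_sub_distrib, hG1sum, hG2sum, smul_sub]
    abel
  rw [hsplit]
  refine add_mem (Submodule.sum_mem _ ?_)
    (Submodule.smul_mem _ _ (Submodule.sum_mem _ ?_))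
  · intro t _
    obtain ⟨s', b, rfl⟩ := bidx_surj hl h t
    by_cases hba : b.val < a.val
    · have hG1e : (if bidx h s' b = bidx h s ⟨a.val - 1,
            lt_of_le_of_lt (Nat.sub_le _ _) a.isLt⟩ ∧ 1 ≤ a.val then
            fU M (bidx h s' b) (bidx h q ⟨0, hl⟩) else 0)
          = (if a.val = b.val + 1 ∧ s = s' then
              fU M (bidx h s' b) (bidx h q ⟨0, hl⟩) else 0) := by
        apply if_congr _ rfl rfl
        constructor
        · rintro ⟨he, -⟩
          obtain ⟨hs, hb⟩ := bidx_inj h he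
          have := congrArg Fin.val hb
          simp at this
          exact ⟨by omega, hs.symm⟩
        · rintro ⟨hv, hs⟩
          subst hs
          exact ⟨congrArg (bidx h s) (Fin.ext (by simp; omega)), by omega⟩
      rw [hG1e]
      have h1 := mulA_ef hl h q s s' M a b hba
      have heq : Ue (bidx h s a) (bidx h s' b) * fU M (bidx h s' b) (bidx h q ⟨0, hl⟩)
          - (if a.val = b.val + 1 ∧ s = s' then
              fU M (bidx h s' b) (bidx h q ⟨0, hl⟩) else 0)
          = (Ue (bidx h s a) (bidx h s' b) * fU M (bidx h s' b) (bidx h q ⟨0, hl⟩)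
            - (if a.val = b.val + 1 ∧ s = s' then
                fU M (bidx h s' b) (bidx h q ⟨0, hl⟩) else 0)
            - fU M (bidx h s a) (bidx h q ⟨0, hl⟩))
            + fU M (bidx h s a) (bidx h q ⟨0, hl⟩) := by abel
      rw [heq]
      exact add_mem (ichi_mem_smod h h1) (fU_mem_smod hl h q s M a (ihF s a))
    · push_neg at hba
      have hG1z : (if bidx h s' b = bidx h s ⟨a.val - 1,
            lt_of_le_of_lt (Nat.sub_le _ _) a.isLt⟩ ∧ 1 ≤ a.val then
            fU M (bidx h s' b) (bidx h q ⟨0, hl⟩) else 0) = 0 := by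
        rw [if_neg]
        rintro ⟨he, h1⟩
        have := congrArg Fin.val (bidx_inj h he).2
        simp at this
        omega
      rw [hG1z, sub_zero]
      have hB := mulB_f hl h q s s' M a b hba false (ihF s' b)
      simpa only [← Ue_eq_pgElem] using hB
  · intro t _
    obtain ⟨s', b, rfl⟩ := bidx_surj hl h t
    by_cases hba : b.val < a.val
    · have hG2z : (if hM : a.val ≤ M ∧ M < l then
          (if bidx h s' b = bidx h q ⟨M, hM.2⟩ then Uf (bidx h s a) (bidx h s' b) else 0)
          else 0) = 0 := by
        by_cases hM : a.val ≤ M ∧ M < l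
        · rw [dif_pos hM, if_neg]
          intro he
          have := congrArg Fin.val (bidx_inj h he).2
          simp at this
          omega
        · rw [dif_neg hM]
      rw [hG2z, sub_zero]
      have h1 := mulA_fe hl h q s s' M a b hba
      have heq : Uf (bidx h s a) (bidx h s' b) * eU M (bidx h s' b) (bidx h q ⟨0, hl⟩)
          = (Uf (bidx h s a) (bidx h s' b) * eU M (bidx h s' b) (bidx h q ⟨0, hl⟩)
              - ((-1 : ℂ) ^ (M + 1)) • fU M (bidx h s a) (bidx h q ⟨0, hl⟩))
            + ((-1 : ℂ) ^ (M + 1)) • fU M (bidx h s a) (bidx h q ⟨0, hl⟩) := by abel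
      rw [heq]
      exact add_mem (ichi_mem_smod h h1)
        (Submodule.smul_mem _ _ (fU_mem_smod hl h q s M a (ihF s a)))
    · push_neg at hba
      have hG2e : (if hM : a.val ≤ M ∧ M < l then
          (if bidx h s' b = bidx h q ⟨M, hM.2⟩ then Uf (bidx h s a) (bidx h s' b) else 0)
          else 0)
          = (if b.val = M then kd s' q • Uf (bidx h s a) (bidx h s' b) else 0) := by
        by_cases hM : a.val ≤ M ∧ M < l
        · rw [dif_pos hM]
          by_cases hbM : b.val = M
          · rw [if_pos hbM]
            by_cases hsq : s' = q
            · rw [if_pos (by subst hsq; exact congrArg (bidx h s') (Fin.ext hbM)),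
                hsq, kd_self, one_smul]
            · rw [if_neg (fun he => hsq (bidx_inj h he).1), kd_of_ne hsq, zero_smul]
          · rw [if_neg hbM, if_neg]
            intro he
            have := congrArg Fin.val (bidx_inj h he).2
            simp at this
            omega
        · rw [dif_neg hM, if_neg (fun hbM => hM ⟨by omega, by have := b.isLt; omega⟩)]
      rw [hG2e]
      have hB := mulB_e hl h q s s' M a b hba true (ihE s' b)
      simpa only [← Uf_eq_pgElem] using hB

end Aux7e


section Aux7f

variable {n l : ℕ}

lemma kd_bidx (hl : 0 < l) (h : l ∣ n) (s q : Fin (n / l)) :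
    kd (bidx h s ⟨0, hl⟩) (bidx h q ⟨0, hl⟩) = kd s q := by
  by_cases hsq : s = q
  · subst hsq; rw [kd_self, kd_self]
  · rw [kd_of_ne hsq, kd_of_ne (fun he => hsq (bidx_inj h he).1)]

theorem mainClaim (hl : 0 < l) (h : l ∣ n) (q : Fin (n / l)) :
    ∀ (M : ℕ) (s : Fin (n / l)) (a : Fin l),
      (eU M (bidx h s a) (bidx h q ⟨0, hl⟩) - AeT h q M s a.val ∈
        SMod n l h (2 * M - 2 * a.val) (2 * M - 2 * a.val - 2)) ∧
      (fU M (bidx h s a) (bidx h q ⟨0, hl⟩) - AfT h q M s a.val ∈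
        SMod n l h (2 * M - 2 * a.val) (2 * M - 2 * a.val - 2)) := by
  intro M
  induction M with
  | zero =>
      intro s a
      constructor
      · by_cases ha : a.val = 0
        · have ha' : a = ⟨0, hl⟩ := Fin.ext ha
          subst ha'
          rw [eU_zero, AeT_eq h q s rfl, kd_bidx hl h s q,
            Algebra.algebraMap_eq_smul_one, sub_self]
          exact Submodule.zero_mem _
        · rw [eU_zero, AeT_lt h q s (by omega), sub_zero]
          have hkd : kd (bidx h s a) (bidx h q ⟨0, hl⟩) = 0 := by
            apply kd_of_ne
            intro he
            have := congrArg Fin.val (bidx_inj h he).2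
            simp at this
            omega
          rw [hkd, map_zero]
          exact Submodule.zero_mem _
      · rw [fU_zero, AfT_le h q s (by omega), sub_zero]
        exact Submodule.zero_mem _
  | succ M ih =>
      intro s a
      have ihE := fun s' b => (ih s' b).1
      have ihF := fun s' b => (ih s' b).2
      by_cases ha : a.val = 0
      · have ha' : a = ⟨0, hl⟩ := Fin.ext ha
        subst ha'
        constructor
        · have hE := stepE hl h q s M ⟨0, hl⟩ ihE ihF
          rw [if_neg (by norm_num), sub_zero] at hE
          rw [AeT_row_zero h q s M hl]
          have hdite : (if hM : (⟨0, hl⟩ : Fin l).val ≤ M ∧ M < l then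
              Ue (bidx h s ⟨0, hl⟩) (bidx h q ⟨M, hM.2⟩) else 0)
              = (if hM : M < l then Ue (bidx h s ⟨0, hl⟩) (bidx h q ⟨M, hM⟩) else 0) := by
            by_cases hM : M < l
            · rw [dif_pos ⟨by norm_num, hM⟩, dif_pos hM]
            · rw [dif_neg (by tauto), dif_neg hM]
          rw [hdite] at hE
          exact hE
        · have hF := stepF hl h q s M ⟨0, hl⟩ ihE ihF
          rw [if_neg (by norm_num), sub_zero] at hF
          rw [AfT_row_zero h q s M hl]
          have hdite : (-1 : ℂ) ^ M • (if hM : (⟨0, hl⟩ : Fin l).val ≤ M ∧ M < l then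
              Uf (bidx h s ⟨0, hl⟩) (bidx h q ⟨M, hM.2⟩) else 0)
              = (if hM : M < l then
                  (-1 : ℂ) ^ M • Uf (bidx h s ⟨0, hl⟩) (bidx h q ⟨M, hM⟩) else 0) := by
            by_cases hM : M < l
            · rw [dif_pos ⟨by norm_num, hM⟩, dif_pos hM]
            · rw [dif_neg (by tauto), dif_neg hM, smul_zero]
          rw [hdite] at hF
          exact hF
      · -- a.val ≥ 1
        have hpf : a.val - 1 < l := lt_of_le_of_lt (Nat.sub_le _ _) a.isLt
        have hval : (⟨a.val - 1, lt_of_le_of_lt (Nat.sub_le _ _) a.isLt⟩ : Fin l).val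
            = a.val - 1 := rfl
        have hhead : ∀ c : ℕ, AeT h q c s (a.val - 1 + 1) = AeT h q c s a.val := by
          intro c; congr 1; omega
        have hheadf : ∀ c : ℕ, AfT h q c s (a.val - 1 + 1) = AfT h q c s a.val := by
          intro c; congr 1; omega
        constructor
        · have hE := stepE hl h q s M a ihE ihF
          rw [if_pos (by omega)] at hE
          have ih1 := ihE s ⟨a.val - 1, lt_of_le_of_lt (Nat.sub_le _ _) a.isLt⟩
          rw [hval] at ih1
          have hrec := AeT_succ h q s M (a.val - 1) (by omega)
          have hUe : (if hM : a.val - 1 + 1 ≤ M ∧ M < l then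
              Ue (bidx h s ⟨a.val - 1 + 1, by omega⟩) (bidx h q ⟨M, hM.2⟩) else 0)
              = (if hM : a.val ≤ M ∧ M < l then
                  Ue (bidx h s a) (bidx h q ⟨M, hM.2⟩) else 0) := by
            by_cases hM : a.val ≤ M ∧ M < l
            · rw [dif_pos ⟨by omega, hM.2⟩, dif_pos hM]
              exact Ue_congr (congrArg (bidx h s) (Fin.ext (by simp; omega))) rfl
            · rw [dif_neg (by omega), dif_neg hM]
          have hAeT : AeT h q (M + 1) s a.val = AeT h q M s (a.val - 1) +
              (if hM : a.val ≤ M ∧ M < l then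
                Ue (bidx h s a) (bidx h q ⟨M, hM.2⟩) else 0) := by
            rw [← hhead (M + 1), hrec, ← hUe]
          rw [hAeT]
          have habel : eU (M + 1) (bidx h s a) (bidx h q ⟨0, hl⟩)
              - (AeT h q M s (a.val - 1) +
                (if hM : a.val ≤ M ∧ M < l then
                  Ue (bidx h s a) (bidx h q ⟨M, hM.2⟩) else 0))
              = (eU (M + 1) (bidx h s a) (bidx h q ⟨0, hl⟩)
                - eU M (bidx h s ⟨a.val - 1, lt_of_le_of_lt (Nat.sub_le _ _) a.isLt⟩)
                    (bidx h q ⟨0, hl⟩)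
                - (if hM : a.val ≤ M ∧ M < l then
                    Ue (bidx h s a) (bidx h q ⟨M, hM.2⟩) else 0))
                + (eU M (bidx h s ⟨a.val - 1, lt_of_le_of_lt (Nat.sub_le _ _) a.isLt⟩)
                    (bidx h q ⟨0, hl⟩) - AeT h q M s (a.val - 1)) := by
            abel
          rw [habel]
          exact add_mem hE (smod_mono h (Or.inr ⟨by omega, by omega⟩) ih1)
        · have hF := stepF hl h q s M a ihE ihF
          rw [if_pos (by omega)] at hF
          have ih1 := ihF s ⟨a.val - 1, lt_of_le_of_lt (Nat.sub_le _ _) a.isLt⟩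
          rw [hval] at ih1
          have hrec := AfT_succ h q s M (a.val - 1) (by omega)
          have hUf : (if hM : a.val - 1 + 1 ≤ M ∧ M < l then
              ((-1 : ℂ) ^ M) • Uf (bidx h s ⟨a.val - 1 + 1, by omega⟩) (bidx h q ⟨M, hM.2⟩)
              else 0)
              = (-1 : ℂ) ^ M • (if hM : a.val ≤ M ∧ M < l then
                  Uf (bidx h s a) (bidx h q ⟨M, hM.2⟩) else 0) := by
            by_cases hM : a.val ≤ M ∧ M < l
            · rw [dif_pos ⟨by omega, hM.2⟩, dif_pos hM]
              congr 1
              exact Uf_congr (congrArg (bidx h s) (Fin.ext (by simp; omega))) rfl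
            · rw [dif_neg (by omega), dif_neg hM, smul_zero]
          have hAfT : AfT h q (M + 1) s a.val = AfT h q M s (a.val - 1) +
              (-1 : ℂ) ^ M • (if hM : a.val ≤ M ∧ M < l then
                Uf (bidx h s a) (bidx h q ⟨M, hM.2⟩) else 0) := by
            rw [← hheadf (M + 1), hrec, ← hUf]
          rw [hAfT]
          have habel : fU (M + 1) (bidx h s a) (bidx h q ⟨0, hl⟩)
              - (AfT h q M s (a.val - 1) +
                (-1 : ℂ) ^ M • (if hM : a.val ≤ M ∧ M < l then
                  Uf (bidx h s a) (bidx h q ⟨M, hM.2⟩) else 0))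
              = (fU (M + 1) (bidx h s a) (bidx h q ⟨0, hl⟩)
                - fU M (bidx h s ⟨a.val - 1, lt_of_le_of_lt (Nat.sub_le _ _) a.isLt⟩)
                    (bidx h q ⟨0, hl⟩)
                - (-1 : ℂ) ^ M • (if hM : a.val ≤ M ∧ M < l then
                    Uf (bidx h s a) (bidx h q ⟨M, hM.2⟩) else 0))
                + (fU M (bidx h s ⟨a.val - 1, lt_of_le_of_lt (Nat.sub_le _ _) a.isLt⟩)
                    (bidx h q ⟨0, hl⟩) - AfT h q M s (a.val - 1)) := by
            abel
          rw [habel]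
          exact add_mem hF (smod_mono h (Or.inr ⟨by omega, by omega⟩) ih1)

end Aux7f


section Aux7g

variable {n l : ℕ}

lemma AeSum_eq_finSum (h : l ∣ n) (q p : Fin (n / l)) (k r : ℕ) (hr : r + k ≤ l) :
    AeSum h q p k r = ∑ i : Fin r,
      Ue (bidx h p ⟨i.val, by have := i.isLt; omega⟩)
         (bidx h q ⟨i.val + k, by have := i.isLt; omega⟩) := by
  rw [AeSum, Finset.sum_range]
  apply Finset.sum_congr rfl
  intro i _
  rw [dif_pos (show i.val + k < l by have := i.isLt; omega)]

lemma AfSum_eq_finSum (h : l ∣ n) (q p : Fin (n / l)) (k r : ℕ) (hr : r + k ≤ l) :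
    AfSum h q p k r = ∑ i : Fin r,
      ((-1 : ℂ) ^ (i.val + k)) •
        Uf (bidx h p ⟨i.val, by have := i.isLt; omega⟩)
           (bidx h q ⟨i.val + k, by have := i.isLt; omega⟩) := by
  rw [AfSum, Finset.sum_range]
  apply Finset.sum_congr rfl
  intro i _
  rw [dif_pos (show i.val + k < l by have := i.isLt; omega)]

end Aux7g

/-- Let `l ∣ n`, `1 ≤ p,q ≤ n/l`, `0 ≤ k ≤ l-1`, `1 ≤ m ≤ l`, and set
`r = min(m, l-k)`.  Then
`P(π(e^{(m+k)}_{l(p-1)+m, l(q-1)+1})) = Σ_{i=1}^{r} e_{l(p-1)+i, l(q-1)+i+k}` and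
`P(π(f^{(m+k)}_{l(p-1)+m, l(q-1)+1})) = Σ_{i=1}^{r} (-1)^{i+k-1} f_{l(p-1)+i, l(q-1)+i+k}`;
in particular these classes have Kazhdan degree `2k+2` and highest weight `2k`.
(As in Statement 6, `P(π(X)) = y` is expressed as: modulo `I_χ`, `X` equals `y` plus a
linear combination of `U(p)`-monomials of Kazhdan degree `< 2k+2`, or of Kazhdan degree
`≤ 2k+2` and weight `< 2k`.) -/
theorem statement7 (n l : ℕ) (hl : 0 < l) (h : l ∣ n) (p q : Fin (n / l))
    (k m : ℕ) (hk : k ≤ l - 1) (hm1 : 1 ≤ m) (hm2 : m ≤ l) :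
    (∃ c ∈ LowSpan n l h (2 * k + 2) (2 * k),
      piq n l h (eU (m + k) (bidx h p ⟨m - 1, by omega⟩) (bidx h q ⟨0, hl⟩)) =
        piq n l h
          ((∑ i : Fin (min m (l - k)),
              Ue (bidx h p ⟨i.val, by have := i.isLt; omega⟩)
                 (bidx h q ⟨i.val + k, by have := i.isLt; omega⟩)) + c)) ∧
    (∃ c ∈ LowSpan n l h (2 * k + 2) (2 * k),
      piq n l h (fU (m + k) (bidx h p ⟨m - 1, by omega⟩) (bidx h q ⟨0, hl⟩)) =
        piq n l h
          ((∑ i : Fin (min m (l - k)),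
              ((-1 : ℂ) ^ (i.val + k)) •
                Uf (bidx h p ⟨i.val, by have := i.isLt; omega⟩)
                   (bidx h q ⟨i.val + k, by have := i.isLt; omega⟩)) + c)) := by
  have hl' := hl
  have hmain := mainClaim hl h q (m + k) p ⟨m - 1, by omega⟩
  have hval : ((⟨m - 1, by omega⟩ : Fin l)).val = m - 1 := rfl
  have hSM : SMod n l h (2 * (m + k) - 2 * (m - 1)) (2 * (m + k) - 2 * (m - 1) - 2)
      = SMod n l h (2 * k + 2) (2 * k) := by
    congr 1 <;> omega
  have hrk : min m (l - k) + k ≤ l := by omega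
  constructor
  · have hE := hmain.1
    rw [hval, hSM] at hE
    have hA : AeT h q (m + k) p (m - 1) = AeSum h q p k (min m (l - k)) := by
      rw [AeT_gt h q p (by omega)]
      rw [show m + k - (m - 1) - 1 = k from by omega,
        show m - 1 + 1 = m from by omega]
    rw [hA, AeSum_eq_finSum h q p k (min m (l - k)) hrk] at hE
    obtain ⟨c, hc, z, hz, hcz⟩ := Submodule.mem_sup.mp hE
    refine ⟨c, hc, ?_⟩
    have heq := sub_eq_iff_eq_add'.mp hcz.symm
    rw [piq, Submodule.mkQ_apply, Submodule.mkQ_apply, Submodule.Quotient.eq]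
    have hz' : eU (m + k) (bidx h p ⟨m - 1, by omega⟩) (bidx h q ⟨0, hl⟩)
        - ((∑ i : Fin (min m (l - k)),
            Ue (bidx h p ⟨i.val, by have := i.isLt; omega⟩)
               (bidx h q ⟨i.val + k, by have := i.isLt; omega⟩)) + c) = z := by
      rw [heq]; abel
    rw [hz']
    exact hz
  · have hF := hmain.2
    rw [hval, hSM] at hF
    have hA : AfT h q (m + k) p (m - 1) = AfSum h q p k (min m (l - k)) := by
      rw [AfT_gt h q p (by omega)]
      rw [show m + k - (m - 1) - 1 = k from by omega,
        show m - 1 + 1 = m from by omega]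
    rw [hA, AfSum_eq_finSum h q p k (min m (l - k)) hrk] at hF
    obtain ⟨c, hc, z, hz, hcz⟩ := Submodule.mem_sup.mp hF
    refine ⟨c, hc, ?_⟩
    have heq := sub_eq_iff_eq_add'.mp hcz.symm
    rw [piq, Submodule.mkQ_apply, Submodule.mkQ_apply, Submodule.Quotient.eq]
    have hz' : fU (m + k) (bidx h p ⟨m - 1, by omega⟩) (bidx h q ⟨0, hl⟩)
        - ((∑ i : Fin (min m (l - k)),
            ((-1 : ℂ) ^ (i.val + k)) •
              Uf (bidx h p ⟨i.val, by have := i.isLt; omega⟩)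
                 (bidx h q ⟨i.val + k, by have := i.isLt; omega⟩)) + c) = z := by
      rw [heq]; abel
    rw [hz']
    exact hz
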